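/- arXiv:2512.01931 — 13 statements merged into one kernel-verified Lean document; each statement's English description precedes it below -/
import Mathlib

section
/- Let X be a real normed space, fix real numbers α, η, β with 1 < α < η < β and a constant C > 0, and let N, A, B : X → ℝ be Fréchet differentiable on X, positively homogeneous of degrees η, α, β respectively (N(su) = s^η N(u), A(su) = s^α A(u), B(su) = s^β B(u) for all s > 0, u ∈ X), and satisfy N(u) ≥ C⁻¹‖u‖^η for all u ∈ X. Define Φ_λ(u) = N(u)/η − λ·A(u)/α − B(u)/β. If c < 0, λ ∈ ℝ and u ∈ X satisfy Φ_λ(u) = c and Φ_λ′(u) = 0 (vanishing Fréchet derivative), then u ≠ 0 and λ·A(u) > 0. -/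
/-!
Testing the criticality `Φ_λ'(u) = 0` against `u` itself and using Euler's identity
`f'(u) u = d · f(u)` for a `d`-homogeneous `f` gives the Nehari identity
`N(u) = λ A(u) + B(u)`. Eliminating `B(u)` from `Φ_λ(u) = c` then yields
`c = (1/η - 1/β) N(u) + (1/β - 1/α) λ A(u)`; the first term is nonnegative and the
coefficient `1/β - 1/α` is negative, so `c < 0` forces `λ A(u) > 0`, and `u ≠ 0` because `A(0) = 0`.
-/

open Topology

section

variable {X : Type*} [NormedAddCommGroup X] [NormedSpace ℝ X]

def PosHomogeneous (f : X → ℝ) (d : ℝ) : Prop :=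
  ∀ s : ℝ, 0 < s → ∀ u : X, f (s • u) = s ^ d * f u

namespace PosHomogeneous

variable {f : X → ℝ} {d : ℝ}

theorem fderiv_apply_self (hf : PosHomogeneous f d) {u : X} (hfu : DifferentiableAt ℝ f u) :
    fderiv ℝ f u u = d * f u := by
  have hline : HasDerivAt (fun s : ℝ => f (s • u)) (fderiv ℝ f u u) 1 := by
    have hsmul : HasDerivAt (fun s : ℝ => s • u) u 1 := by
      simpa using (hasDerivAt_id (1 : ℝ)).smul_const u
    have hfu' : HasFDerivAt f (fderiv ℝ f u) ((1 : ℝ) • u) := by simpa using hfu.hasFDerivAt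
    exact hfu'.comp_hasDerivAt (1 : ℝ) hsmul
  have hpow : HasDerivAt (fun s : ℝ => s ^ d * f u) (d * f u) 1 := by
    simpa using (Real.hasDerivAt_rpow_const (p := d) (Or.inl one_ne_zero)).mul_const (f u)
  have heq : (fun s : ℝ => f (s • u)) =ᶠ[𝓝 1] fun s => s ^ d * f u := by
    filter_upwards [eventually_gt_nhds one_pos] with s hs using hf s hs u
  exact (hline.congr_of_eventuallyEq heq.symm).unique hpow

theorem map_zero (hf : PosHomogeneous f d) (hd : d ≠ 0) (hf0 : DifferentiableAt ℝ f 0) :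
    f 0 = 0 := by
  have h := hf.fderiv_apply_self hf0
  rw [ContinuousLinearMap.map_zero, zero_eq_mul] at h
  exact h.resolve_left hd

end PosHomogeneous

theorem fderiv_energy_apply_self {N A B : X → ℝ} {η α β : ℝ} (lam : ℝ) {u : X}
    (hN : PosHomogeneous N η) (hA : PosHomogeneous A α) (hB : PosHomogeneous B β)
    (hη : η ≠ 0) (hα : α ≠ 0) (hβ : β ≠ 0)
    (hNu : DifferentiableAt ℝ N u) (hAu : DifferentiableAt ℝ A u) (hBu : DifferentiableAt ℝ B u) :
    fderiv ℝ (fun v => N v / η - lam * A v / α - B v / β) u u = N u - lam * A u - B u := by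
  have hΦ : (fun v => N v / η - lam * A v / α - B v / β)
      = fun v => η⁻¹ * N v - (lam / α) * A v - β⁻¹ * B v := by
    funext v; ring
  rw [hΦ, fderiv_fun_sub (by fun_prop) (by fun_prop), fderiv_fun_sub (by fun_prop) (by fun_prop),
    fderiv_const_mul hNu, fderiv_const_mul hAu, fderiv_const_mul hBu]
  simp only [sub_apply, smul_apply, smul_eq_mul,
    hN.fderiv_apply_self hNu, hA.fderiv_apply_self hAu, hB.fderiv_apply_self hBu]
  field_simp

end

/-- For the abstract concave–convex functional
`Φ_λ(u) = N u/η − λ·A u/α − B u/β` with `N, A, B` Fréchet differentiable and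
positively homogeneous of degrees `η, α, β` (`1 < α < η < β`), and
`N u ≥ C⁻¹‖u‖^η`, any solution `(λ, u)` of `Φ_λ(u) = c < 0`, `Φ_λ′(u) = 0`
satisfies `u ≠ 0` and `λ·A(u) > 0`. -/
theorem stmt2 {X : Type*} [NormedAddCommGroup X] [NormedSpace ℝ X]
    (α η β C : ℝ) (hα : 1 < α) (hαη : α < η) (hηβ : η < β) (hC : 0 < C)
    (N A B : X → ℝ)
    (hNd : Differentiable ℝ N) (hAd : Differentiable ℝ A) (hBd : Differentiable ℝ B)
    (hNh : ∀ s : ℝ, 0 < s → ∀ u : X, N (s • u) = s ^ η * N u)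
    (hAh : ∀ s : ℝ, 0 < s → ∀ u : X, A (s • u) = s ^ α * A u)
    (hBh : ∀ s : ℝ, 0 < s → ∀ u : X, B (s • u) = s ^ β * B u)
    (hNlow : ∀ u : X, C⁻¹ * ‖u‖ ^ η ≤ N u)
    (c lam : ℝ) (hc : c < 0) (u : X)
    (hval : N u / η - lam * A u / α - B u / β = c)
    (hcrit : fderiv ℝ (fun v => N v / η - lam * A v / α - B v / β) u = 0) :
    u ≠ 0 ∧ 0 < lam * A u := by
  have hα0 : α ≠ 0 := by positivity
  have hη0 : 0 < η := by linarith
  have hβ0 : 0 < β := by linarith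
  have hNehari : N u - lam * A u - B u = 0 := by
    rw [← fderiv_energy_apply_self lam hNh hAh hBh hη0.ne' hα0 hβ0.ne' (hNd u) (hAd u) (hBd u),
      hcrit, zero_apply]
  have hc_eq : c = (1 / η - 1 / β) * N u + (1 / β - 1 / α) * (lam * A u) := by
    rw [← hval, show B u = N u - lam * A u by linarith]
    ring
  have hN_nonneg : 0 ≤ (1 / η - 1 / β) * N u :=
    mul_nonneg (sub_nonneg.2 (one_div_le_one_div_of_le hη0 hηβ.le))
      ((by positivity : 0 ≤ C⁻¹ * ‖u‖ ^ η).trans (hNlow u))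
  have hpos : 0 < lam * A u :=
    pos_of_mul_neg_right (a := 1 / β - 1 / α) (by linarith)
      (sub_nonpos.2 (one_div_le_one_div_of_le (by linarith) (by linarith)))
  refine ⟨?_, hpos⟩
  rintro rfl
  rw [PosHomogeneous.map_zero hAh hα0 (hAd 0), mul_zero] at hpos
  exact lt_irrefl 0 hpos
end

section
/- Fix real numbers α, η, β with 1 < α < η < β, and real numbers N > 0, A ≠ 0, B. Then there exist c ∈ ℝ and t > 0 such that φ_c′(t) = 0 and φ_c″(t) = 0 if and only if B > 0. Moreover, when B > 0 this pair (c, t) is unique and is given by t = ((η−α)N/((β−α)B))^{1/(β−η)} and c = −((η−α)(β−η)/(ηβα)) · ((η−α)/(β−α))^{η/(β−η)} · N^{β/(β−η)}/B^{η/(β−η)}. -/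
/-!
On `(0, ∞)` the fibering map is `(α / A) (N/η t^(η-α) - B/β t^(β-α) - c t^(-α))`, so `φ_c'(t)` and
`φ_c''(t)` vanish exactly when two linear equations in `N t^η`, `B t^β` and `c` hold. Adding
`α + 1` times the first to the second eliminates `c` and leaves the balance
`N (η - α) t^η = B (β - α) t^β`, which forces `B > 0` and determines `t`; then `c` is read off
from `φ_c'(t) = 0`.
-/

/-- The fibering map `φ_c(t) = ((t^η/η)N − (t^β/β)B − c)/((t^α/α)A)` on `(0,∞)`. -/
noncomputable def fib (α η β N A B c : ℝ) : ℝ → ℝ :=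
  fun t => ((t ^ η / η) * N - (t ^ β / β) * B - c) / ((t ^ α / α) * A)

open Real Filter Topology

section PowerSum

variable {ι : Type*} (s : Finset ι) (a p : ι → ℝ) {t : ℝ}

theorem hasDerivAt_sum_mul_rpow (ht : 0 < t) :
    HasDerivAt (fun x => ∑ i ∈ s, a i * x ^ p i) (∑ i ∈ s, a i * p i * t ^ (p i - 1)) t := by
  refine HasDerivAt.fun_sum fun i _ => ?_
  simpa [mul_assoc] using ((hasDerivAt_rpow_const (Or.inl ht.ne')).const_mul (a i))

theorem deriv_deriv_sum_mul_rpow (ht : 0 < t) :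
    deriv (deriv fun x => ∑ i ∈ s, a i * x ^ p i) t =
      ∑ i ∈ s, a i * p i * (p i - 1) * t ^ (p i - 2) := by
  have hderiv : deriv (fun x => ∑ i ∈ s, a i * x ^ p i) =ᶠ[𝓝 t]
      fun x => ∑ i ∈ s, (a i * p i) * x ^ (p i - 1) := by
    filter_upwards [Ioi_mem_nhds ht] with x hx
    exact (hasDerivAt_sum_mul_rpow s a p hx).deriv
  rw [hderiv.deriv_eq, (hasDerivAt_sum_mul_rpow s _ _ ht).deriv]
  congr! 2 with i
  ring_nf

end PowerSum

section Fibering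

variable {α η β N A B c t : ℝ}

theorem fib_eventuallyEq (hα : α ≠ 0) (hη : η ≠ 0) (hβ : β ≠ 0) (hA : A ≠ 0) (ht : 0 < t) :
    fib α η β N A B c =ᶠ[𝓝 t] fun x => ∑ i : Fin 3,
      ![α * N / (A * η), -(α * B / (A * β)), -(α * c / A)] i * x ^ ![η - α, β - α, -α] i := by
  filter_upwards [Ioi_mem_nhds ht] with x hx
  have hxα : x ^ α ≠ 0 := (rpow_pos_of_pos hx α).ne'
  simp only [fib, Fin.sum_univ_three, Matrix.cons_val_zero, Matrix.cons_val_one,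
    Matrix.cons_val_two, Matrix.head_cons, Matrix.tail_cons]
  rw [rpow_sub hx, rpow_sub hx, rpow_neg hx.le]
  field_simp
  ring

theorem deriv_fib (hα : α ≠ 0) (hη : η ≠ 0) (hβ : β ≠ 0) (hA : A ≠ 0) (ht : 0 < t) :
    deriv (fib α η β N A B c) t = α / (A * η * β) * t ^ (-α - 1) *
      (β * (η - α) * N * t ^ η - η * (β - α) * B * t ^ β + α * η * β * c) := by
  have hpow : ∀ q, t ^ (q - α - 1) = t ^ (-α - 1) * t ^ q := fun q => by
    rw [← rpow_add ht]; ring_nf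
  rw [(fib_eventuallyEq hα hη hβ hA ht).deriv_eq, (hasDerivAt_sum_mul_rpow _ _ _ ht).deriv]
  simp only [Fin.sum_univ_three, Matrix.cons_val_zero, Matrix.cons_val_one,
    Matrix.cons_val_two, Matrix.head_cons, Matrix.tail_cons, hpow]
  field_simp
  ring

theorem deriv_deriv_fib (hα : α ≠ 0) (hη : η ≠ 0) (hβ : β ≠ 0) (hA : A ≠ 0) (ht : 0 < t) :
    deriv (deriv (fib α η β N A B c)) t = α / (A * η * β) * t ^ (-α - 2) *
      ((η - α - 1) * β * (η - α) * N * t ^ η - (β - α - 1) * η * (β - α) * B * t ^ β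
        - (α + 1) * α * η * β * c) := by
  have hpow : ∀ q, t ^ (q - α - 2) = t ^ (-α - 2) * t ^ q := fun q => by
    rw [← rpow_add ht]; ring_nf
  rw [(fib_eventuallyEq hα hη hβ hA ht).deriv.deriv_eq, deriv_deriv_sum_mul_rpow _ _ _ ht]
  simp only [Fin.sum_univ_three, Matrix.cons_val_zero, Matrix.cons_val_one,
    Matrix.cons_val_two, Matrix.head_cons, Matrix.tail_cons, hpow]
  field_simp
  ring

theorem deriv_fib_eq_zero_and_deriv_deriv_fib_eq_zero_iff (hα : α ≠ 0) (hη : η ≠ 0)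
    (hβ : β ≠ 0) (hA : A ≠ 0) (ht : 0 < t) :
    deriv (fib α η β N A B c) t = 0 ∧ deriv (deriv (fib α η β N A B c)) t = 0 ↔
      N * (η - α) * t ^ η = B * (β - α) * t ^ β ∧
        α * η * β * c = -((η - α) * (β - η) * (N * t ^ η)) := by
  have hscale : α / (A * η * β) ≠ 0 := by positivity
  rw [deriv_fib hα hη hβ hA ht, deriv_deriv_fib hα hη hβ hA ht]
  simp only [mul_eq_zero, hscale, (rpow_pos_of_pos ht _).ne', false_or]
  generalize t ^ η = X, t ^ β = Y
  constructor
  · rintro ⟨h1, h2⟩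
    have hbal : η * β * (N * (η - α) * X - B * (β - α) * Y) = 0 := by
      linear_combination (α + 1) * h1 + h2
    have hbal := (mul_eq_zero.1 hbal).resolve_left (mul_ne_zero hη hβ)
    exact ⟨sub_eq_zero.1 hbal, by linear_combination h1 - η * hbal⟩
  · rintro ⟨hbal, hc⟩
    exact ⟨by linear_combination hc + η * hbal,
      by linear_combination (β - α - 1) * η * hbal - (α + 1) * hc⟩

theorem sub_mul_div_sub_mul_pos (hN : 0 < N) (hB : 0 < B) (hαη : α < η) (hηβ : η < β) :
    0 < (η - α) * N / ((β - α) * B) := by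
  have hηα : 0 < η - α := sub_pos.2 hαη
  have hβα : 0 < β - α := sub_pos.2 (hαη.trans hηβ)
  positivity

theorem mul_rpow_eq_mul_rpow_iff (hN : 0 < N) (hB : 0 < B) (hαη : α < η) (hηβ : η < β)
    (ht : 0 < t) :
    N * (η - α) * t ^ η = B * (β - α) * t ^ β ↔
      t = ((η - α) * N / ((β - α) * B)) ^ ((1 : ℝ) / (β - η)) := by
  have hX : t ^ η ≠ 0 := (rpow_pos_of_pos ht η).ne'
  have hsplit : t ^ β = t ^ η * t ^ (β - η) := by rw [← rpow_add ht]; ring_nf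
  rw [one_div, eq_rpow_inv ht.le (sub_mul_div_sub_mul_pos hN hB hαη hηβ).le (by linarith),
    hsplit, eq_div_iff (mul_pos (by linarith) hB).ne']
  constructor
  · intro h
    apply mul_left_cancel₀ hX
    linear_combination -h
  · intro h
    linear_combination -(t ^ η) * h

theorem mul_rpow_one_div_sub_rpow (hN : 0 < N) (hB : 0 < B) (hαη : α < η) (hηβ : η < β) :
    N * (((η - α) * N / ((β - α) * B)) ^ ((1 : ℝ) / (β - η))) ^ η =
      ((η - α) / (β - α)) ^ (η / (β - η)) * (N ^ (β / (β - η)) / B ^ (η / (β - η))) := by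
  have hβη : β - η ≠ 0 := by linarith
  have hηα : 0 < η - α := sub_pos.2 hαη
  have hβα : 0 < β - α := sub_pos.2 (hαη.trans hηβ)
  rw [← rpow_mul (sub_mul_div_sub_mul_pos hN hB hαη hηβ).le, mul_div_mul_comm,
    mul_rpow (by positivity) (by positivity),
    div_rpow hN.le hB.le, show β / (β - η) = 1 + η / (β - η) by field_simp; ring,
    rpow_add hN, rpow_one, one_div_mul_eq_div]
  ring

end Fibering

/-- The system `φ_c′(t) = 0 = φ_c″(t)` has a solution `(c,t)` with
`t > 0` iff `B > 0`; and in that case the solution is unique and given by the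
explicit formulas for `t(u)` and `c(u)`. -/
theorem stmt3 (α η β N A B : ℝ) (h1 : 1 < α) (h2 : α < η) (h3 : η < β)
    (hN : 0 < N) (hA : A ≠ 0) :
    ((∃ c t : ℝ, 0 < t ∧ deriv (fib α η β N A B c) t = 0 ∧
        deriv (deriv (fib α η β N A B c)) t = 0) ↔ 0 < B) ∧
    (0 < B → ∀ c t : ℝ, 0 < t → deriv (fib α η β N A B c) t = 0 →
        deriv (deriv (fib α η β N A B c)) t = 0 →
        t = ((η - α) * N / ((β - α) * B)) ^ ((1 : ℝ) / (β - η)) ∧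
        c = -((η - α) * (β - η) / (η * β * α)) * ((η - α) / (β - α)) ^ (η / (β - η)) *
              (N ^ (β / (β - η)) / B ^ (η / (β - η)))) := by
  have hα : 0 < α := by linarith
  have hη : 0 < η := by linarith
  have hβ : 0 < β := by linarith
  have hcrit (c t : ℝ) (ht : 0 < t) :=
    deriv_fib_eq_zero_and_deriv_deriv_fib_eq_zero_iff (N := N) (B := B) (c := c)
      hα.ne' hη.ne' hβ.ne' hA ht
  refine ⟨⟨?_, fun hB => ?_⟩, fun hB c t ht hd1 hd2 => ?_⟩
  · rintro ⟨c, t, ht, hcritical⟩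
    obtain ⟨hbal, -⟩ := (hcrit c t ht).1 hcritical
    have hpos : 0 < B * ((β - α) * t ^ β) := by
      rw [← mul_assoc, ← hbal]
      exact mul_pos (mul_pos hN (sub_pos.2 h2)) (rpow_pos_of_pos ht η)
    exact pos_of_mul_pos_left hpos (mul_pos (by linarith) (rpow_pos_of_pos ht β)).le
  · set t := ((η - α) * N / ((β - α) * B)) ^ ((1 : ℝ) / (β - η))
    have ht : 0 < t := rpow_pos_of_pos (sub_mul_div_sub_mul_pos hN hB h2 h3) _
    refine ⟨-((η - α) * (β - η) * (N * t ^ η)) / (α * η * β), t, ht, (hcrit _ t ht).2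
      ⟨(mul_rpow_eq_mul_rpow_iff hN hB h2 h3 ht).2 rfl, by field_simp⟩⟩
  · obtain ⟨hbal, hc⟩ := (hcrit c t ht).1 ⟨hd1, hd2⟩
    have htu := (mul_rpow_eq_mul_rpow_iff hN hB h2 h3 ht).1 hbal
    refine ⟨htu, ?_⟩
    rw [mul_assoc, ← mul_rpow_one_div_sub_rpow hN hB h2 h3, ← htu]
    field_simp
    linear_combination hc
end

section
/- Let X be a real normed space, fix real numbers α, η, β with 1 < α < η < β and a constant C > 0, and let N, A, B : X → ℝ satisfy C⁻¹‖u‖^η ≤ N(u) ≤ C‖u‖^η, |A(u)| ≤ C‖u‖^α and |B(u)| ≤ C‖u‖^β for all u ∈ X. Then there exists ε > 0, depending only on α, η, β and C, such that for every u ∈ X with A(u) > 0 and B(u) > 0 one has c(u) ≤ −ε, where c(u) = −((η−α)(β−η)/(ηβα)) · ((η−α)/(β−α))^{η/(β−η)} · N(u)^{β/(β−η)}/B(u)^{η/(β−η)}. In particular the extremal value c* = sup{c(u) : A(u) > 0, B(u) > 0} is negative whenever this set is nonempty. -/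
/-!
Write `p = β/(β-η)` and `q = η/(β-η)`, so that `η p = β q`. Then the lower bound on `N` and the
upper bound on `B` give `N(u)^p / B(u)^q ≥ (C⁻¹‖u‖^η)^p / (C‖u‖^β)^q = C^{-(p+q)}`: the powers of
`‖u‖` cancel exactly, and the bound is independent of `u`.
-/

open Real

noncomputable section

namespace Fibering

def extremalCoeff (α η β : ℝ) : ℝ :=
  ((η - α) * (β - η) / (η * β * α)) * ((η - α) / (β - α)) ^ (η / (β - η))

/-- The extremal value `c(u)`, as a function of `n = N(u)` and `b = B(u)`. -/
def extremalValue (α η β n b : ℝ) : ℝ :=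
  -((η - α) * (β - η) / (η * β * α)) * ((η - α) / (β - α)) ^ (η / (β - η)) *
    (n ^ (β / (β - η)) / b ^ (η / (β - η)))

theorem extremalValue_eq (α η β n b : ℝ) :
    extremalValue α η β n b =
      -(extremalCoeff α η β * (n ^ (β / (β - η)) / b ^ (η / (β - η)))) := by
  rw [extremalValue, extremalCoeff]
  ring

theorem extremalCoeff_pos {α η β : ℝ} (hα : 0 < α) (hαη : α < η) (hηβ : η < β) :
    0 < extremalCoeff α η β := by
  have : 0 < η - α := by linarith
  have : 0 < β - η := by linarith
  have : 0 < β - α := by linarith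
  have : 0 < η := by linarith
  have : 0 < β := by linarith
  unfold extremalCoeff
  exact mul_pos (by positivity) (rpow_pos_of_pos (by positivity) _)

theorem inv_mul_rpow_div_mul_rpow {C r η β p q : ℝ} (hC : 0 < C) (hr : 0 < r)
    (hpq : η * p = β * q) :
    (C⁻¹ * r ^ η) ^ p / (C * r ^ β) ^ q = C ^ (-(p + q)) := by
  rw [mul_rpow (by positivity) (by positivity), mul_rpow hC.le (by positivity),
    ← rpow_mul hr.le, ← rpow_mul hr.le, hpq, inv_rpow hC.le, ← rpow_neg hC.le,
    mul_div_mul_right _ _ (rpow_pos_of_pos hr _).ne', ← rpow_sub hC]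
  ring_nf

theorem rpow_neg_add_le_rpow_div_rpow {C r η β p q n b : ℝ} (hC : 0 < C) (hr : 0 < r)
    (hp : 0 ≤ p) (hq : 0 ≤ q) (hpq : η * p = β * q)
    (hn : C⁻¹ * r ^ η ≤ n) (hb : 0 < b) (hb' : b ≤ C * r ^ β) :
    C ^ (-(p + q)) ≤ n ^ p / b ^ q := by
  rw [← inv_mul_rpow_div_mul_rpow hC hr hpq]
  have hn₀ : 0 ≤ C⁻¹ * r ^ η := by positivity
  exact div_le_div₀ (rpow_nonneg (hn₀.trans hn) p)
    (rpow_le_rpow hn₀ hn hp) (rpow_pos_of_pos hb q) (rpow_le_rpow hb.le hb' hq)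

theorem extremalValue_le {α η β C r n b : ℝ} (hα : 0 < α) (hαη : α < η) (hηβ : η < β)
    (hC : 0 < C) (hr : 0 < r) (hn : C⁻¹ * r ^ η ≤ n) (hb : 0 < b) (hb' : b ≤ C * r ^ β) :
    extremalValue α η β n b ≤
      -(extremalCoeff α η β * C ^ (-(β / (β - η) + η / (β - η)))) := by
  have hβη : 0 < β - η := by linarith
  have hbound := rpow_neg_add_le_rpow_div_rpow (p := β / (β - η)) (q := η / (β - η)) hC hr
    (div_nonneg (by linarith) hβη.le) (div_nonneg (by linarith) hβη.le) (by field_simp)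
    hn hb hb'
  rw [extremalValue_eq, neg_le_neg_iff]
  exact mul_le_mul_of_nonneg_left hbound (extremalCoeff_pos hα hαη hηβ).le

end Fibering

open Fibering in
theorem stmt4_general {X : Type*} [NormedAddCommGroup X] [NormedSpace ℝ X]
    (α η β C : ℝ) (h1 : 1 < α) (h2 : α < η) (h3 : η < β) (hC : 0 < C)
    (N A B : X → ℝ)
    (hNlow : ∀ u : X, C⁻¹ * ‖u‖ ^ η ≤ N u)
    (hB : ∀ u : X, |B u| ≤ C * ‖u‖ ^ β) :
    ∃ ε : ℝ, 0 < ε ∧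
      (∀ u : X, 0 < A u → 0 < B u →
        -((η - α) * (β - η) / (η * β * α)) * ((η - α) / (β - α)) ^ (η / (β - η)) *
            ((N u) ^ (β / (β - η)) / (B u) ^ (η / (β - η))) ≤ -ε) ∧
      ((∃ u : X, 0 < A u ∧ 0 < B u) →
        sSup {x : ℝ | ∃ u : X, 0 < A u ∧ 0 < B u ∧
          x = -((η - α) * (β - η) / (η * β * α)) * ((η - α) / (β - α)) ^ (η / (β - η)) *
                ((N u) ^ (β / (β - η)) / (B u) ^ (η / (β - η)))} < 0) := by
  have hα : 0 < α := by linarith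
  set ε := extremalCoeff α η β * C ^ (-(β / (β - η) + η / (β - η)))
  have hε : 0 < ε := mul_pos (extremalCoeff_pos hα h2 h3) (rpow_pos_of_pos hC _)
  have hbound : ∀ u : X, 0 < A u → 0 < B u → extremalValue α η β (N u) (B u) ≤ -ε := by
    intro u _ hBu
    have hBu' : B u ≤ C * ‖u‖ ^ β := (le_abs_self _).trans (hB u)
    have hu : u ≠ 0 := by
      rintro rfl
      rw [norm_zero, zero_rpow (by linarith), mul_zero] at hBu'
      linarith
    exact extremalValue_le hα h2 h3 hC (norm_pos_iff.mpr hu) (hNlow u) hBu hBu'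
  refine ⟨ε, hε, hbound, ?_⟩
  rintro ⟨u, hAu, hBu⟩
  have hsSup : sSup {x : ℝ | ∃ u : X, 0 < A u ∧ 0 < B u ∧
      x = extremalValue α η β (N u) (B u)} ≤ -ε := by
    refine csSup_le ⟨_, u, hAu, hBu, rfl⟩ ?_
    rintro x ⟨v, hAv, hBv, rfl⟩
    exact hbound v hAv hBv
  exact hsSup.trans_lt (neg_neg_of_pos hε)

/-- Under the growth conditions `C⁻¹‖u‖^η ≤ N(u) ≤ C‖u‖^η`,
`|A(u)| ≤ C‖u‖^α`, `|B(u)| ≤ C‖u‖^β` (`1 < α < η < β`), the extremal value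
functional `c(u)` is bounded above by `−ε` on `{A > 0} ∩ {B > 0}` for some
`ε > 0` depending only on `α, η, β, C`; in particular its supremum `c*` is
negative whenever this set is nonempty. -/
theorem stmt4 {X : Type*} [NormedAddCommGroup X] [NormedSpace ℝ X]
    (α η β C : ℝ) (h1 : 1 < α) (h2 : α < η) (h3 : η < β) (hC : 0 < C)
    (N A B : X → ℝ)
    (hNlow : ∀ u : X, C⁻¹ * ‖u‖ ^ η ≤ N u) (hNup : ∀ u : X, N u ≤ C * ‖u‖ ^ η)
    (hA : ∀ u : X, |A u| ≤ C * ‖u‖ ^ α)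
    (hB : ∀ u : X, |B u| ≤ C * ‖u‖ ^ β) :
    ∃ ε : ℝ, 0 < ε ∧
      (∀ u : X, 0 < A u → 0 < B u →
        -((η - α) * (β - η) / (η * β * α)) * ((η - α) / (β - α)) ^ (η / (β - η)) *
            ((N u) ^ (β / (β - η)) / (B u) ^ (η / (β - η))) ≤ -ε) ∧
      ((∃ u : X, 0 < A u ∧ 0 < B u) →
        sSup {x : ℝ | ∃ u : X, 0 < A u ∧ 0 < B u ∧
          x = -((η - α) * (β - η) / (η * β * α)) * ((η - α) / (β - α)) ^ (η / (β - η)) *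
                ((N u) ^ (β / (β - η)) / (B u) ^ (η / (β - η)))} < 0) :=
  stmt4_general α η β C h1 h2 h3 hC N A B hNlow hB
end
end

section
/- Fix real numbers α, η, β with 1 < α < η < β, and real numbers N > 0, A > 0, B ≤ 0. (a) If c ≥ 0 then φ_c has no critical points in (0,∞). (b) If c < 0 then φ_c has exactly one critical point t⁺ ∈ (0,∞); moreover φ_c″(t⁺) > 0 and t⁺ is a strict global minimizer of φ_c on (0,∞). -/
open Set Filter Topology

noncomputable def powSum (a b η β c t : ℝ) : ℝ := a * t ^ η + b * t ^ β + c

section PowSum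

variable {a b η β c : ℝ}

lemma powSum_zero (hη : η ≠ 0) (hβ : β ≠ 0) : powSum a b η β c 0 = c := by
  simp [powSum, Real.zero_rpow hη, Real.zero_rpow hβ]

lemma lt_powSum {t : ℝ} (ha : 0 < a) (hb : 0 ≤ b) (ht : 0 < t) : c < powSum a b η β c t := by
  have := Real.rpow_pos_of_pos ht η
  have := Real.rpow_nonneg ht.le β
  exact lt_add_of_pos_left c (by positivity)

lemma continuous_powSum (hη : 0 ≤ η) (hβ : 0 ≤ β) : Continuous (powSum a b η β c) := by
  unfold powSum
  have := (continuous_id.rpow_const fun _ => Or.inr hη)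
  have := (continuous_id.rpow_const fun _ => Or.inr hβ)
  fun_prop

lemma strictMonoOn_powSum (ha : 0 < a) (hb : 0 ≤ b) (hη : 0 < η) (hβ : 0 ≤ β) :
    StrictMonoOn (powSum a b η β c) (Ici 0) := by
  intro x hx y hy hxy
  have hxyη : x ^ η < y ^ η := Real.rpow_lt_rpow hx hxy hη
  have hxyβ : x ^ β ≤ y ^ β := Real.rpow_le_rpow hx hxy.le hβ
  unfold powSum
  linarith [mul_lt_mul_of_pos_left hxyη ha, mul_le_mul_of_nonneg_left hxyβ hb]

lemma hasDerivAt_powSum {t : ℝ} (ht : 0 < t) :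
    HasDerivAt (powSum a b η β c) (a * (η * t ^ (η - 1)) + b * (β * t ^ (β - 1))) t :=
  (((Real.hasDerivAt_rpow_const (Or.inl ht.ne')).const_mul a).add
    ((Real.hasDerivAt_rpow_const (Or.inl ht.ne')).const_mul b)).add_const c

lemma exists_pos_powSum_eq_zero (ha : 0 < a) (hb : 0 ≤ b) (hη : 0 < η) (hβ : 0 < β)
    (hc : c < 0) : ∃ t, 0 < t ∧ powSum a b η β c t = 0 := by
  -- at `T` the terms `a T^η` and `c` cancel
  set T := (-c / a) ^ η⁻¹
  have hT : 0 < T := Real.rpow_pos_of_pos (div_pos (neg_pos.2 hc) ha) _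
  have hTη : a * T ^ η = -c := by
    rw [Real.rpow_inv_rpow (div_pos (neg_pos.2 hc) ha).le hη.ne']
    field_simp
  have hpT : 0 ≤ powSum a b η β c T := by
    have := Real.rpow_nonneg hT.le β
    unfold powSum
    nlinarith
  have h0 : (0 : ℝ) ∈ Icc (powSum a b η β c 0) (powSum a b η β c T) := by
    rw [powSum_zero hη.ne' hβ.ne']
    exact ⟨hc.le, hpT⟩
  obtain ⟨t, ht, hroot⟩ :=
    intermediate_value_Icc hT.le (continuous_powSum hη.le hβ.le).continuousOn h0
  refine ⟨t, ht.1.lt_of_ne ?_, hroot⟩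
  rintro rfl
  rw [powSum_zero hη.ne' hβ.ne'] at hroot
  exact hc.ne hroot

end PowSum

lemma deriv_deriv_eq_of_eventuallyEq_mul {f g h : ℝ → ℝ} {x h' : ℝ}
    (hf : deriv f =ᶠ[𝓝 x] g * h) (hg : DifferentiableAt ℝ g x) (hh : HasDerivAt h h' x)
    (hx : h x = 0) : deriv (deriv f) x = g x * h' := by
  rw [hf.deriv_eq, (hg.hasDerivAt.mul hh).deriv, hx, mul_zero, zero_add]

lemma lt_of_deriv_neg_of_deriv_pos {f : ℝ → ℝ} {a x₀ : ℝ} (hx₀ : a < x₀)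
    (hf : DifferentiableOn ℝ f (Ioi a)) (hneg : ∀ x ∈ Ioo a x₀, deriv f x < 0)
    (hpos : ∀ x ∈ Ioi x₀, 0 < deriv f x) {s : ℝ} (hs : a < s) (hsx₀ : s ≠ x₀) :
    f x₀ < f s := by
  rcases hsx₀.lt_or_gt with hlt | hgt
  · have hanti : StrictAntiOn f (Ioc a x₀) :=
      strictAntiOn_of_deriv_neg (convex_Ioc a x₀) (hf.mono Ioc_subset_Ioi_self).continuousOn
        (by simpa using hneg)
    exact hanti ⟨hs, hlt.le⟩ ⟨hx₀, le_rfl⟩ hlt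
  · have hmono : StrictMonoOn f (Ici x₀) :=
      strictMonoOn_of_deriv_pos (convex_Ici x₀)
        (hf.mono fun x hx => hx₀.trans_le hx).continuousOn (by simpa using hpos)
    exact hmono self_mem_Ici hgt.le hgt

noncomputable def fibWeight (α A t : ℝ) : ℝ := α ^ 2 / (A * t ^ (α + 1))

section Fib

variable {α η β N A B c t : ℝ}

lemma fibWeight_pos (hα : α ≠ 0) (hA : 0 < A) (ht : 0 < t) : 0 < fibWeight α A t := by
  have := Real.rpow_pos_of_pos ht (α + 1)
  unfold fibWeight
  positivity

lemma differentiableAt_fibWeight (hA : A ≠ 0) (ht : 0 < t) :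
    DifferentiableAt ℝ (fibWeight α A) t := by
  have := Real.rpow_pos_of_pos ht (α + 1)
  exact (differentiableAt_const _).div
    ((Real.differentiableAt_rpow_const_of_ne _ ht.ne').const_mul A) (by positivity)

lemma hasDerivAt_fib (hα : α ≠ 0) (hη : η ≠ 0) (hβ : β ≠ 0) (hA : A ≠ 0) (ht : 0 < t) :
    HasDerivAt (fib α η β N A B c)
      (fibWeight α A t * powSum (N * (η - α) / (α * η)) (B * (α - β) / (α * β)) η β c t) t := by
  have hnum : HasDerivAt (fun t => t ^ η / η * N - t ^ β / β * B - c)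
      (η * t ^ (η - 1) / η * N - β * t ^ (β - 1) / β * B) t :=
    ((((Real.hasDerivAt_rpow_const (Or.inl ht.ne')).div_const η).mul_const N).sub
      (((Real.hasDerivAt_rpow_const (Or.inl ht.ne')).div_const β).mul_const B)).sub_const c
  have hden := ((Real.hasDerivAt_rpow_const (p := α) (Or.inl ht.ne')).div_const α).mul_const A
  have := Real.rpow_pos_of_pos ht α
  refine (hnum.div hden (by positivity)).congr_deriv ?_
  rw [fibWeight, powSum, Real.rpow_sub ht, Real.rpow_sub ht, Real.rpow_sub ht, Real.rpow_add ht,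
    Real.rpow_one]
  field_simp
  ring

variable (N B c) in
lemma eqOn_deriv_fib (hα : α ≠ 0) (hη : η ≠ 0) (hβ : β ≠ 0) (hA : A ≠ 0) :
    EqOn (deriv (fib α η β N A B c))
      (fibWeight α A * powSum (N * (η - α) / (α * η)) (B * (α - β) / (α * β)) η β c) (Ioi 0) :=
  fun _ ht => (hasDerivAt_fib hα hη hβ hA ht).deriv

lemma differentiableOn_fib (hα : α ≠ 0) (hη : η ≠ 0) (hβ : β ≠ 0) (hA : A ≠ 0) :
    DifferentiableOn ℝ (fib α η β N A B c) (Ioi 0) :=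
  fun _ ht => (hasDerivAt_fib hα hη hβ hA ht).differentiableAt.differentiableWithinAt

end Fib

/-- For `N > 0`, `A > 0`, `B ≤ 0`:
(a) if `c ≥ 0` then `φ_c` has no critical point in `(0,∞)`;
(b) if `c < 0` then `φ_c` has a unique critical point `t⁺ > 0`, which satisfies
`φ_c″(t⁺) > 0` and is a strict global minimizer of `φ_c` on `(0,∞)`. -/
theorem stmt5 (α η β N A B : ℝ) (h1 : 1 < α) (h2 : α < η) (h3 : η < β)
    (hN : 0 < N) (hA : 0 < A) (hB : B ≤ 0) :
    (∀ c : ℝ, 0 ≤ c → ∀ t : ℝ, 0 < t → deriv (fib α η β N A B c) t ≠ 0) ∧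
    (∀ c : ℝ, c < 0 → ∃ tp : ℝ, 0 < tp ∧ deriv (fib α η β N A B c) tp = 0 ∧
      (∀ t : ℝ, 0 < t → deriv (fib α η β N A B c) t = 0 → t = tp) ∧
      0 < deriv (deriv (fib α η β N A B c)) tp ∧
      ∀ s : ℝ, 0 < s → s ≠ tp → fib α η β N A B c tp < fib α η β N A B c s) := by
  have hα : 0 < α := by linarith
  have hη : 0 < η := by linarith
  have hβ : 0 < β := by linarith
  set a := N * (η - α) / (α * η)
  set b := B * (α - β) / (α * β)
  have ha : 0 < a := div_pos (mul_pos hN (by linarith)) (by positivity)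
  have hb : 0 ≤ b := div_nonneg (mul_nonneg_of_nonpos_of_nonpos hB (by linarith)) (by positivity)
  have hφ' := fun c => eqOn_deriv_fib N B c hα.ne' hη.ne' hβ.ne' hA.ne'
  refine ⟨fun c hc t ht => ?_, fun c hc => ?_⟩
  · rw [hφ' c ht]
    exact (mul_pos (fibWeight_pos hα.ne' hA ht) (hc.trans_lt (lt_powSum ha hb ht))).ne'
  obtain ⟨tp, htp, hroot⟩ := exists_pos_powSum_eq_zero ha hb hη hβ hc
  have hmono := strictMonoOn_powSum (c := c) ha hb hη hβ.le
  refine ⟨tp, htp, by rw [hφ' c htp, Pi.mul_apply, hroot, mul_zero], fun t ht h0 => ?_, ?_,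
    fun s hs hstp => lt_of_deriv_neg_of_deriv_pos htp
      (differentiableOn_fib hα.ne' hη.ne' hβ.ne' hA.ne') (fun t ht => ?_) (fun t ht => ?_) hs hstp⟩
  · rw [hφ' c ht, Pi.mul_apply, mul_eq_zero, or_iff_right (fibWeight_pos hα.ne' hA ht).ne'] at h0
    exact hmono.injOn ht.le htp.le (h0.trans hroot.symm)
  · rw [deriv_deriv_eq_of_eventuallyEq_mul ((hφ' c).eventuallyEq_of_mem (Ioi_mem_nhds htp))
      (differentiableAt_fibWeight hA.ne' htp) (hasDerivAt_powSum htp) hroot]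
    have := Real.rpow_pos_of_pos htp (η - 1)
    have := Real.rpow_pos_of_pos htp (β - 1)
    exact mul_pos (fibWeight_pos hα.ne' hA htp) (by positivity)
  · rw [hφ' c ht.1, Pi.mul_apply]
    exact mul_neg_of_pos_of_neg (fibWeight_pos hα.ne' hA ht.1) (hroot ▸ hmono ht.1.le htp.le ht.2)
  · have ht0 := htp.trans ht
    rw [hφ' c ht0, Pi.mul_apply]
    exact mul_pos (fibWeight_pos hα.ne' hA ht0) (hroot ▸ hmono htp.le ht0.le ht)
end

section
/- Fix real numbers α, η, β with 1 < α < η < β, real numbers N > 0, A > 0, B, and c < 0. If t > 0 satisfies φ_c′(t) = 0 and φ_c″(t) > 0, then t^η < (−αβη c)/((β−η)(η−α)N). -/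
/-!
For `t > 0` the fibering map is a sum of three powers,
`φ_c(t) = (α/A) (N/η · t^(η-α) - B/β · t^(β-α) - c · t^(-α))`.
For such a sum `g = a t^p + b t^q + d t^r`, the combination `t² g''(t) - (q - 1) t g'(t)` no
longer involves `b`, so at a critical point with `g'' > 0` it gives an inequality between the
`t^p` and `t^r` terms alone, which for `φ_c` is the claimed bound on `t^η`.
-/

open Filter Topology

section RpowSum

variable {a b d p q r t : ℝ}

theorem hasDerivAt_rpow_sum3 (ht : 0 < t) :
    HasDerivAt (fun s => a * s ^ p + b * s ^ q + d * s ^ r)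
      (a * p * t ^ (p - 1) + b * q * t ^ (q - 1) + d * r * t ^ (r - 1)) t := by
  have hpow (e : ℝ) : HasDerivAt (fun s : ℝ => s ^ e) (e * t ^ (e - 1)) t :=
    Real.hasDerivAt_rpow_const (Or.inl ht.ne')
  exact ((((hpow p).const_mul a).add ((hpow q).const_mul b)).add ((hpow r).const_mul d)).congr_deriv
    (by ring)

theorem deriv_rpow_sum3 (ht : 0 < t) :
    deriv (fun s => a * s ^ p + b * s ^ q + d * s ^ r) t
      = a * p * t ^ (p - 1) + b * q * t ^ (q - 1) + d * r * t ^ (r - 1) :=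
  (hasDerivAt_rpow_sum3 ht).deriv

theorem deriv_deriv_rpow_sum3 (ht : 0 < t) :
    deriv (deriv (fun s => a * s ^ p + b * s ^ q + d * s ^ r)) t
      = a * p * (p - 1) * t ^ (p - 1 - 1) + b * q * (q - 1) * t ^ (q - 1 - 1)
        + d * r * (r - 1) * t ^ (r - 1 - 1) := by
  have hderiv : deriv (fun s => a * s ^ p + b * s ^ q + d * s ^ r) =ᶠ[𝓝 t]
      fun s => a * p * s ^ (p - 1) + b * q * s ^ (q - 1) + d * r * s ^ (r - 1) := by
    filter_upwards [eventually_gt_nhds ht] with s hs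
    exact deriv_rpow_sum3 hs
  rw [hderiv.deriv_eq, deriv_rpow_sum3 ht]

theorem rpow_sum3_pos_of_deriv_eq_zero_of_deriv_deriv_pos (ht : 0 < t)
    (hcrit : deriv (fun s => a * s ^ p + b * s ^ q + d * s ^ r) t = 0)
    (hconv : 0 < deriv (deriv (fun s => a * s ^ p + b * s ^ q + d * s ^ r)) t) :
    0 < a * p * (p - q) * t ^ (p - r) + d * r * (r - q) := by
  rw [deriv_rpow_sum3 ht] at hcrit
  rw [deriv_deriv_rpow_sum3 ht] at hconv
  have hw : 0 < t ^ (r - 1 - 1) := Real.rpow_pos_of_pos ht _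
  have hsub2 (e : ℝ) : t ^ (e - 1 - 1) = t ^ (e - r) * t ^ (r - 1 - 1) := by
    rw [← Real.rpow_add ht]; ring_nf
  have hsub1 (e : ℝ) : t ^ (e - 1) = t ^ (e - r) * t ^ (r - 1 - 1) * t := by
    rw [← Real.rpow_add ht, ← Real.rpow_add_one ht.ne']; ring_nf
  rw [hsub1 p, hsub1 q, hsub1 r] at hcrit
  rw [hsub2 p, hsub2 q, hsub2 r] at hconv
  simp only [sub_self, Real.rpow_zero] at hcrit hconv
  have hfirst : a * p * t ^ (p - r) + b * q * t ^ (q - r) + d * r = 0 := by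
    have : (a * p * t ^ (p - r) + b * q * t ^ (q - r) + d * r) * (t ^ (r - 1 - 1) * t) = 0 := by
      rw [← hcrit]; ring
    exact (mul_eq_zero.mp this).resolve_right (by positivity)
  have hsecond : 0 < a * p * (p - 1) * t ^ (p - r) + b * q * (q - 1) * t ^ (q - r)
      + d * r * (r - 1) := by
    refine pos_of_mul_pos_left (b := t ^ (r - 1 - 1)) ?_ hw.le
    linarith
  linear_combination hsecond + (q - 1) * hfirst

end RpowSum

theorem fib_eq_rpow_sum3 {α η β N A B c t : ℝ} (hα : α ≠ 0) (hA : A ≠ 0) (ht : 0 < t) :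
    fib α η β N A B c t = α * N / (A * η) * t ^ (η - α) + -(α * B / (A * β)) * t ^ (β - α)
      + -(α * c / A) * t ^ (-α) := by
  have htα : t ^ α ≠ 0 := (Real.rpow_pos_of_pos ht α).ne'
  simp only [fib, Real.rpow_sub ht, Real.rpow_neg ht.le]
  field_simp
  ring

theorem stmt10_general (α η β N A B : ℝ) (h1 : 1 < α) (h2 : α < η) (h3 : η < β)
    (hN : 0 < N) (hA : 0 < A) (c : ℝ)
    (t : ℝ) (ht : 0 < t)
    (hcrit : deriv (fib α η β N A B c) t = 0)
    (hconv : 0 < deriv (deriv (fib α η β N A B c)) t) :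
    t ^ η < -(α * β * η * c) / ((β - η) * (η - α) * N) := by
  have hα : 0 < α := by linarith
  have hη : 0 < η := by linarith
  have hfib : fib α η β N A B c =ᶠ[𝓝 t] fun s => α * N / (A * η) * s ^ (η - α)
      + -(α * B / (A * β)) * s ^ (β - α) + -(α * c / A) * s ^ (-α) := by
    filter_upwards [eventually_gt_nhds ht] with s hs
    exact fib_eq_rpow_sum3 hα.ne' hA.ne' hs
  rw [hfib.deriv_eq] at hcrit
  rw [hfib.deriv.deriv_eq] at hconv
  have key := rpow_sum3_pos_of_deriv_eq_zero_of_deriv_deriv_pos ht hcrit hconv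
  rw [show η - α - -α = η by ring] at key
  have hbound : 0 < (η - α) * (η - β) * N * t ^ η - α * β * η * c := by
    have hfac : 0 < α / (A * η) := by positivity
    refine pos_of_mul_pos_right (a := α / (A * η)) (key.trans_eq ?_) hfac.le
    field_simp
    ring
  rw [lt_div_iff₀ (by have := sub_pos.2 h2; have := sub_pos.2 h3; positivity)]
  linarith

/-- For `N > 0`, `A > 0` and `c < 0`, any `t > 0` with
`φ_c′(t) = 0` and `φ_c″(t) > 0` satisfies `t^η < (−αβη c)/((β−η)(η−α)N)`. -/
theorem stmt10 (α η β N A B : ℝ) (h1 : 1 < α) (h2 : α < η) (h3 : η < β)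
    (hN : 0 < N) (hA : 0 < A) (c : ℝ) (hc : c < 0)
    (t : ℝ) (ht : 0 < t)
    (hcrit : deriv (fib α η β N A B c) t = 0)
    (hconv : 0 < deriv (deriv (fib α η β N A B c)) t) :
    t ^ η < -(α * β * η * c) / ((β - η) * (η - α) * N) :=
  stmt10_general α η β N A B h1 h2 h3 hN hA c t ht hcrit hconv
end

section
/- Fix real numbers α, η, β with 1 < α < η < β, and real numbers N > 0, A ≠ 0, B > 0. Then the system φ_c(t) = 0 and φ_c′(t) = 0 has exactly one solution (t, c) ∈ (0,∞) × ℝ, namely t₀ = (N/B)^{1/(β−η)} and c₀ = ((β−η)/(ηβ)) · N^{β/(β−η)}/B^{η/(β−η)}; in particular c₀ > 0. Moreover, for every c ∈ ℝ one has φ_c(t₀) = α(c₀ − c)/(t₀^α · A). -/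
open Real

noncomputable def fibNum (η β N B : ℝ) (t : ℝ) : ℝ :=
  t ^ η / η * N - t ^ β / β * B

noncomputable def fibCritPoint (η β N B : ℝ) : ℝ :=
  (N / B) ^ ((1 : ℝ) / (β - η))

noncomputable def fibCritLevel (η β N B : ℝ) : ℝ :=
  (β - η) / (η * β) * (N ^ (β / (β - η)) / B ^ (η / (β - η)))

theorem HasDerivAt.div_of_eq_zero {𝕜 𝕜' : Type*} [NontriviallyNormedField 𝕜]
    [NontriviallyNormedField 𝕜'] [NormedAlgebra 𝕜 𝕜'] {f g : 𝕜 → 𝕜'} {f' g' : 𝕜'} {x : 𝕜}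
    (hf : HasDerivAt f f' x) (hg : HasDerivAt g g' x) (hfx : f x = 0) (hgx : g x ≠ 0) :
    HasDerivAt (fun y => f y / g y) (f' / g x) x := by
  convert hf.fun_div hg hgx using 1
  rw [hfx, zero_mul, sub_zero, sq, mul_div_mul_right _ _ hgx]

theorem hasDerivAt_rpow_div_self {p t : ℝ} (hp : p ≠ 0) (ht : t ≠ 0) :
    HasDerivAt (fun x => x ^ p / p) (t ^ (p - 1)) t := by
  simpa only [mul_div_cancel_left₀ _ hp] using
    (hasDerivAt_rpow_const (p := p) (Or.inl ht)).div_const p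

section

variable {α η β N A B : ℝ}

theorem hasDerivAt_fibNum {t : ℝ} (hη : η ≠ 0) (hβ : β ≠ 0) (ht : t ≠ 0) :
    HasDerivAt (fibNum η β N B) (t ^ (η - 1) * N - t ^ (β - 1) * B) t :=
  ((hasDerivAt_rpow_div_self hη ht).mul_const N).sub
    ((hasDerivAt_rpow_div_self hβ ht).mul_const B)

theorem fibCritPoint_pos (hN : 0 < N) (hB : 0 < B) : 0 < fibCritPoint η β N B :=
  rpow_pos_of_pos (div_pos hN hB) _

theorem fibCritPoint_rpow (hN : 0 ≤ N) (hB : 0 ≤ B) (p : ℝ) :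
    fibCritPoint η β N B ^ p = N ^ (p / (β - η)) / B ^ (p / (β - η)) := by
  rw [fibCritPoint, ← rpow_mul (div_nonneg hN hB), one_div_mul_eq_div, div_rpow hN hB]

theorem fibNum_fibCritPoint (hN : 0 < N) (hB : 0 < B) (hη : η ≠ 0) (hβ : β ≠ 0)
    (hηβ : η ≠ β) : fibNum η β N B (fibCritPoint η β N B) = fibCritLevel η β N B := by
  have hs : β - η ≠ 0 := sub_ne_zero.mpr hηβ.symm
  have hβs : β / (β - η) = η / (β - η) + 1 := by field_simp; ring
  have hηs : η / (β - η) = β / (β - η) - 1 := by rw [hβs, add_sub_cancel_right]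
  have hN' : fibCritPoint η β N B ^ η * N = N ^ (β / (β - η)) / B ^ (η / (β - η)) := by
    rw [fibCritPoint_rpow hN.le hB.le, hβs, rpow_add_one hN.ne']
    ring
  have hB' : fibCritPoint η β N B ^ β * B = N ^ (β / (β - η)) / B ^ (η / (β - η)) := by
    rw [fibCritPoint_rpow hN.le hB.le, hηs, rpow_sub_one hB.ne']
    field_simp
  rw [fibNum, fibCritLevel, div_mul_eq_mul_div, div_mul_eq_mul_div, hN', hB']
  field_simp

theorem fibCritLevel_pos (hN : 0 < N) (hB : 0 < B) (hη : 0 < η) (hηβ : η < β) :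
    0 < fibCritLevel η β N B :=
  mul_pos (div_pos (sub_pos.mpr hηβ) (mul_pos hη (hη.trans hηβ)))
    (div_pos (rpow_pos_of_pos hN _) (rpow_pos_of_pos hB _))

theorem deriv_fibNum_eq_zero_iff {t : ℝ} (ht : 0 < t) (hN : 0 < N) (hB : 0 < B)
    (hηβ : η ≠ β) :
    t ^ (η - 1) * N - t ^ (β - 1) * B = 0 ↔ t = fibCritPoint η β N B := by
  have hs : β - η ≠ 0 := sub_ne_zero.mpr hηβ.symm
  have hsplit : t ^ (β - 1) = t ^ (η - 1) * t ^ (β - η) := by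
    rw [← rpow_add ht]; ring_nf
  rw [hsplit, mul_assoc, ← mul_sub, mul_eq_zero_iff_left (rpow_pos_of_pos ht _).ne', sub_eq_zero,
    fibCritPoint, one_div, eq_rpow_inv ht.le (div_pos hN hB).le hs, eq_div_iff hB.ne', eq_comm]

theorem fib_apply (c t : ℝ) :
    fib α η β N A B c t = (fibNum η β N B t - c) / (t ^ α / α * A) :=
  rfl

theorem fib_eq_zero_iff {c t : ℝ} (hα : α ≠ 0) (hA : A ≠ 0) (ht : 0 < t) :
    fib α η β N A B c t = 0 ↔ c = fibNum η β N B t := by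
  have hden : t ^ α / α * A ≠ 0 := by positivity
  rw [fib_apply, div_eq_zero_iff, or_iff_left hden, sub_eq_zero, eq_comm]

theorem hasDerivAt_fib_of_eq_zero {c t : ℝ} (hα : α ≠ 0) (hη : η ≠ 0) (hβ : β ≠ 0)
    (hA : A ≠ 0) (ht : 0 < t) (hfib : fib α η β N A B c t = 0) :
    HasDerivAt (fib α η β N A B c)
      ((t ^ (η - 1) * N - t ^ (β - 1) * B) / (t ^ α / α * A)) t := by
  rw [fib_eq_zero_iff hα hA ht] at hfib
  exact ((hasDerivAt_fibNum hη hβ ht.ne').sub_const c).div_of_eq_zero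
    ((hasDerivAt_rpow_div_self hα ht.ne').mul_const A) (by rw [hfib, sub_self]) (by positivity)

theorem deriv_fib_eq_zero_iff {c t : ℝ} (hα : α ≠ 0) (hη : η ≠ 0) (hβ : β ≠ 0)
    (hηβ : η ≠ β) (hN : 0 < N) (hA : A ≠ 0) (hB : 0 < B) (ht : 0 < t)
    (hfib : fib α η β N A B c t = 0) :
    deriv (fib α η β N A B c) t = 0 ↔ t = fibCritPoint η β N B := by
  have hden : t ^ α / α * A ≠ 0 := by positivity
  rw [(hasDerivAt_fib_of_eq_zero hα hη hβ hA ht hfib).deriv, div_eq_zero_iff, or_iff_left hden,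
    deriv_fibNum_eq_zero_iff ht hN hB hηβ]

theorem fib_fibCritPoint (hN : 0 < N) (hB : 0 < B) (hη : η ≠ 0) (hβ : β ≠ 0) (hηβ : η ≠ β)
    (c : ℝ) :
    fib α η β N A B c (fibCritPoint η β N B) =
      α * (fibCritLevel η β N B - c) / (fibCritPoint η β N B ^ α * A) := by
  rw [fib_apply, fibNum_fibCritPoint hN hB hη hβ hηβ, div_mul_eq_mul_div, div_div_eq_mul_div]
  ring

end

/-- For `N > 0`, `A ≠ 0`, `B > 0`, the system `φ_c(t) = 0 = φ_c′(t)`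
has exactly one solution `(t, c) ∈ (0,∞) × ℝ`, namely `t₀ = (N/B)^{1/(β−η)}` and
`c₀ = ((β−η)/(ηβ))·N^{β/(β−η)}/B^{η/(β−η)} > 0`; moreover
`φ_c(t₀) = α(c₀ − c)/(t₀^α A)` for every `c`. -/
theorem stmt11 (α η β N A B : ℝ) (h1 : 1 < α) (h2 : α < η) (h3 : η < β)
    (hN : 0 < N) (hA : A ≠ 0) (hB : 0 < B) :
    (0 < (N / B) ^ ((1 : ℝ) / (β - η)) ∧
      fib α η β N A B ((β - η) / (η * β) * (N ^ (β / (β - η)) / B ^ (η / (β - η))))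
        ((N / B) ^ ((1 : ℝ) / (β - η))) = 0 ∧
      deriv (fib α η β N A B ((β - η) / (η * β) * (N ^ (β / (β - η)) / B ^ (η / (β - η)))))
        ((N / B) ^ ((1 : ℝ) / (β - η))) = 0) ∧
    (∀ c t : ℝ, 0 < t → fib α η β N A B c t = 0 → deriv (fib α η β N A B c) t = 0 →
      t = (N / B) ^ ((1 : ℝ) / (β - η)) ∧
      c = (β - η) / (η * β) * (N ^ (β / (β - η)) / B ^ (η / (β - η)))) ∧
    0 < (β - η) / (η * β) * (N ^ (β / (β - η)) / B ^ (η / (β - η))) ∧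
    (∀ c : ℝ, fib α η β N A B c ((N / B) ^ ((1 : ℝ) / (β - η))) =
      α * ((β - η) / (η * β) * (N ^ (β / (β - η)) / B ^ (η / (β - η))) - c) /
        (((N / B) ^ ((1 : ℝ) / (β - η))) ^ α * A)) := by
  have hα : α ≠ 0 := by linarith
  have hη : 0 < η := by linarith
  have hβ : β ≠ 0 := by linarith
  have hcrit : fib α η β N A B (fibCritLevel η β N B) (fibCritPoint η β N B) = 0 := by
    rw [fib_fibCritPoint hN hB hη.ne' hβ h3.ne, sub_self, mul_zero, zero_div]
  refine ⟨⟨fibCritPoint_pos hN hB, hcrit,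
      (deriv_fib_eq_zero_iff hα hη.ne' hβ h3.ne hN hA hB (fibCritPoint_pos hN hB) hcrit).mpr rfl⟩,
    ?_, fibCritLevel_pos hN hB hη h3, fib_fibCritPoint hN hB hη.ne' hβ h3.ne⟩
  intro c t ht hfib hderiv
  have hcritPoint : t = fibCritPoint η β N B :=
    (deriv_fib_eq_zero_iff hα hη.ne' hβ h3.ne hN hA hB ht hfib).mp hderiv
  refine ⟨hcritPoint, ?_⟩
  rw [(fib_eq_zero_iff hα hA ht).mp hfib, hcritPoint, fibNum_fibCritPoint hN hB hη.ne' hβ h3.ne]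
  rfl
end

section
/- Fix real numbers α, η, β with 1 < α < η < β, and real numbers N > 0, A > 0, B > 0, and set c₀ = ((β−η)/(ηβ)) · N^{β/(β−η)}/B^{η/(β−η)} and t₀ = (N/B)^{1/(β−η)}. Then for every c ≥ 0: if c < c₀ then sup_{t>0} φ_c(t) > 0; if c = c₀ then sup_{t>0} φ_c(t) = 0 and the supremum is attained at t₀; and if c > c₀ then sup_{t>0} φ_c(t) < 0. -/
/-
Write `g(t) = (t^η/η)N − (t^β/β)B`, so that `φ_c(t) = (g(t) − c)/((t^α/α)A)`. Young's inequality
with the conjugate exponents `β/η` and `β/(β−η)` gives `g ≤ c₀ = youngBound η β N B` on `(0,∞)`,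
with equality at `t₀`. This settles the sign of `φ_c(t₀)` and, for `c = c₀`, of every `φ_c(t)`.
For `c > c₀`, a uniform negative bound comes from perturbing `B`: as `t^α ≤ 1 + t^β`, for small
`κ > 0` we get `g(t) + κ t^α ≤ c₀(N, B − βκ) + κ < c` by continuity of `c₀` in `B`. Finally, for
`c ≥ 0` the set of values is bounded above, since `φ_c(t) ≤ (α/A)(t^{η−α}N/η − t^{β−α}B/β)`, which
is again bounded by Young's inequality; so the junk value of `sSup` never intervenes.
-/

open Filter Topology

noncomputable def youngBound (a b p q : ℝ) : ℝ :=
  (b - a) / (a * b) * (p ^ (b / (b - a)) / q ^ (a / (b - a)))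

theorem rpow_div_mul_sub_rpow_div_mul_le_youngBound {a b p q t : ℝ} (ha : 0 < a) (hab : a < b)
    (hp : 0 ≤ p) (hq : 0 < q) (ht : 0 ≤ t) :
    t ^ a / a * p - t ^ b / b * q ≤ youngBound a b p q := by
  have hb : 0 < b := ha.trans hab
  have hba : 0 < b - a := by linarith
  have hconj : (b / a).HolderConjugate (b / (b - a)) := by
    rw [Real.holderConjugate_iff]
    exact ⟨by rw [lt_div_iff₀ ha]; linarith, by field_simp; ring⟩
  have hY := Real.young_inequality_of_nonneg (by positivity : 0 ≤ t ^ a * q ^ (a / b))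
    (by positivity : 0 ≤ p / q ^ (a / b)) hconj
  have hxy : t ^ a * q ^ (a / b) * (p / q ^ (a / b)) = t ^ a * p := by
    field_simp
  have hx : (t ^ a * q ^ (a / b)) ^ (b / a) = t ^ b * q := by
    rw [Real.mul_rpow (by positivity) (by positivity), ← Real.rpow_mul ht,
      ← Real.rpow_mul hq.le, show a * (b / a) = b by field_simp,
      show a / b * (b / a) = 1 by field_simp, Real.rpow_one]
  have hy : (p / q ^ (a / b)) ^ (b / (b - a)) = p ^ (b / (b - a)) / q ^ (a / (b - a)) := by
    rw [Real.div_rpow hp (by positivity), ← Real.rpow_mul hq.le,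
      show a / b * (b / (b - a)) = a / (b - a) by field_simp]
  rw [hxy, hx, hy] at hY
  unfold youngBound
  field_simp at hY ⊢
  linarith

theorem rpow_div_mul_sub_rpow_div_mul_eq_youngBound {a b p q : ℝ} (ha : 0 < a) (hab : a < b)
    (hp : 0 < p) (hq : 0 < q) :
    ((p / q) ^ (1 / (b - a))) ^ a / a * p - ((p / q) ^ (1 / (b - a))) ^ b / b * q =
      youngBound a b p q := by
  set t := (p / q) ^ (1 / (b - a))
  have hb : 0 < b := ha.trans hab
  have hba : b - a ≠ 0 := by linarith
  have hpq : 0 < p / q := div_pos hp hq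
  have hta : t ^ a = (p / q) ^ (a / (b - a)) := by
    rw [← Real.rpow_mul hpq.le, one_div_mul_eq_div]
  have htb : t ^ b = (p / q) ^ (a / (b - a)) * (p / q) := by
    rw [← Real.rpow_mul hpq.le, show 1 / (b - a) * b = a / (b - a) + 1 by field_simp; ring,
      Real.rpow_add hpq, Real.rpow_one]
  have hp' : p ^ (b / (b - a)) = p ^ (a / (b - a)) * p := by
    rw [show b / (b - a) = a / (b - a) + 1 by field_simp; ring, Real.rpow_add hp, Real.rpow_one]
  have : q ^ (a / (b - a)) ≠ 0 := (Real.rpow_pos_of_pos hq _).ne'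
  rw [youngBound, hta, htb, hp', Real.div_rpow hp.le hq.le]
  field_simp

theorem continuousAt_youngBound {a b p q : ℝ} (hq : 0 < q) : ContinuousAt (youngBound a b p) q :=
  continuousAt_const.mul <| continuousAt_const.div
    (Real.continuousAt_rpow_const _ _ (Or.inl hq.ne')) (Real.rpow_pos_of_pos hq _).ne'

theorem rpow_le_one_add_rpow {t a b : ℝ} (ht : 0 ≤ t) (ha : 0 ≤ a) (hab : a ≤ b) :
    t ^ a ≤ 1 + t ^ b := by
  rcases le_total t 1 with h | h
  · linarith [Real.rpow_le_one ht h ha, Real.rpow_nonneg ht b]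
  · linarith [Real.rpow_le_rpow_of_exponent_le h hab]

section Fibering

variable {α η β N A B c : ℝ}

theorem fib_le_youngBound_sub_div (hα : 0 < α) (hη : 0 < η) (hηβ : η < β) (hN : 0 ≤ N)
    (hA : 0 < A) (hB : 0 < B) {t : ℝ} (ht : 0 < t) :
    fib α η β N A B c t ≤ (youngBound η β N B - c) / (t ^ α / α * A) := by
  have := rpow_div_mul_sub_rpow_div_mul_le_youngBound hη hηβ hN hB ht.le
  unfold fib
  gcongr

theorem fib_div_rpow_one_div_sub (hη : 0 < η) (hηβ : η < β) (hN : 0 < N) (hB : 0 < B) :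
    fib α η β N A B c ((N / B) ^ (1 / (β - η))) =
      (youngBound η β N B - c) / (((N / B) ^ (1 / (β - η))) ^ α / α * A) := by
  rw [fib, rpow_div_mul_sub_rpow_div_mul_eq_youngBound hη hηβ hN hB]

theorem bddAbove_fib (hα : 0 < α) (hαη : α < η) (hηβ : η < β) (hN : 0 ≤ N) (hA : 0 < A)
    (hB : 0 < B) (hc : 0 ≤ c) :
    BddAbove {x : ℝ | ∃ t : ℝ, 0 < t ∧ x = fib α η β N A B c t} := by
  have hη : 0 < η := hα.trans hαη
  have hβ : 0 < β := hη.trans hηβ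
  have hηα : 0 < η - α := by linarith
  have hβα : 0 < β - α := by linarith
  refine ⟨α / A * youngBound (η - α) (β - α) ((η - α) / η * N) ((β - α) / β * B), ?_⟩
  rintro _ ⟨t, ht, rfl⟩
  have hY := rpow_div_mul_sub_rpow_div_mul_le_youngBound hηα (by linarith : η - α < β - α)
    (by positivity : 0 ≤ (η - α) / η * N) (by positivity : 0 < (β - α) / β * B) ht.le
  have hscale : t ^ (η - α) / (η - α) * ((η - α) / η * N) -
      t ^ (β - α) / (β - α) * ((β - α) / β * B) = (t ^ η / η * N - t ^ β / β * B) / t ^ α := by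
    rw [Real.rpow_sub ht, Real.rpow_sub ht]
    field_simp
  have htα : 0 < t ^ α := Real.rpow_pos_of_pos ht α
  rw [hscale, div_le_iff₀ htα] at hY
  rw [fib, div_le_iff₀ (by positivity)]
  calc _ ≤ t ^ η / η * N - t ^ β / β * B := by linarith
    _ ≤ _ := hY
    _ = _ := by field_simp

theorem exists_pos_fib_le_neg (hα : 0 < α) (hαη : α < η) (hηβ : η < β) (hN : 0 ≤ N)
    (hA : 0 < A) (hB : 0 < B) (hc : youngBound η β N B < c) :
    ∃ δ > 0, ∀ t > 0, fib α η β N A B c t ≤ -δ := by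
  have hη : 0 < η := hα.trans hαη
  have hβ : 0 < β := hη.trans hηβ
  have hcont : ContinuousAt (fun κ => youngBound η β N (B - β * κ) + κ) 0 :=
    ((continuousAt_youngBound hB).comp_of_eq (by fun_prop) (by simp)).add continuousAt_id
  have hsmall : ∀ᶠ κ in 𝓝[>] 0, β * κ < B ∧ youngBound η β N (B - β * κ) + κ < c := by
    refine nhdsWithin_le_nhds (Eventually.and ?_ ?_)
    · exact (continuous_const.mul continuous_id).continuousAt.eventually_lt continuousAt_const
        (by simpa using hB)
    · exact hcont.eventually_lt continuousAt_const (by simpa using hc)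
  obtain ⟨κ, ⟨hκB, hκc⟩, hκ : 0 < κ⟩ := (hsmall.and self_mem_nhdsWithin).exists
  refine ⟨κ * α / A, by positivity, fun t ht => ?_⟩
  have hY := rpow_div_mul_sub_rpow_div_mul_le_youngBound hη hηβ hN (by linarith : 0 < B - β * κ)
    ht.le
  have hαβ := rpow_le_one_add_rpow ht.le hα.le (hαη.trans hηβ).le
  rw [fib, div_le_iff₀ (by positivity)]
  have hκB' : t ^ β / β * (B - β * κ) = t ^ β / β * B - κ * t ^ β := by field_simp
  have hκα : -(κ * α / A) * (t ^ α / α * A) = -(κ * t ^ α) := by field_simp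
  rw [hκα]
  nlinarith

end Fibering

/-- For `N, A, B > 0`, `c₀ = ((β−η)/(ηβ))·N^{β/(β−η)}/B^{η/(β−η)}`,
`t₀ = (N/B)^{1/(β−η)}`, and any `c ≥ 0`: if `c < c₀` then `sup_{t>0} φ_c(t) > 0`;
if `c = c₀` then `sup_{t>0} φ_c(t) = 0`, attained at `t₀`; and if `c > c₀` then
`sup_{t>0} φ_c(t) < 0`. -/
theorem stmt12 (α η β N A B : ℝ) (h1 : 1 < α) (h2 : α < η) (h3 : η < β)
    (hN : 0 < N) (hA : 0 < A) (hB : 0 < B) (c : ℝ) (hc : 0 ≤ c) :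
    (c < (β - η) / (η * β) * (N ^ (β / (β - η)) / B ^ (η / (β - η))) →
      0 < sSup {x : ℝ | ∃ t : ℝ, 0 < t ∧ x = fib α η β N A B c t}) ∧
    (c = (β - η) / (η * β) * (N ^ (β / (β - η)) / B ^ (η / (β - η))) →
      sSup {x : ℝ | ∃ t : ℝ, 0 < t ∧ x = fib α η β N A B c t} = 0 ∧
      fib α η β N A B c ((N / B) ^ ((1 : ℝ) / (β - η))) =
        sSup {x : ℝ | ∃ t : ℝ, 0 < t ∧ x = fib α η β N A B c t}) ∧
    ((β - η) / (η * β) * (N ^ (β / (β - η)) / B ^ (η / (β - η))) < c →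
      sSup {x : ℝ | ∃ t : ℝ, 0 < t ∧ x = fib α η β N A B c t} < 0) := by
  have hα : 0 < α := by linarith
  have hη : 0 < η := hα.trans h2
  rw [show (β - η) / (η * β) * (N ^ (β / (β - η)) / B ^ (η / (β - η))) = youngBound η β N B
    from rfl]
  set S := {x : ℝ | ∃ t : ℝ, 0 < t ∧ x = fib α η β N A B c t}
  set t₀ := (N / B) ^ ((1 : ℝ) / (β - η))
  have ht₀ : 0 < t₀ := by positivity
  have hbdd : BddAbove S := bddAbove_fib hα h2 h3 hN.le hA hB hc
  have hmem : fib α η β N A B c t₀ ∈ S := ⟨t₀, ht₀, rfl⟩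
  have hφt₀ := fib_div_rpow_one_div_sub (α := α) (A := A) (c := c) hη h3 hN hB
  have hden : 0 < t₀ ^ α / α * A := by positivity
  refine ⟨fun hlt => ?_, fun heq => ?_, fun hgt => ?_⟩
  · refine lt_of_lt_of_le ?_ (le_csSup hbdd hmem)
    rw [hφt₀]
    exact div_pos (sub_pos.2 hlt) hden
  · have hzero : fib α η β N A B c t₀ = 0 := by rw [hφt₀, heq, sub_self, zero_div]
    have hsup : sSup S = 0 := by
      refine le_antisymm (csSup_le ⟨_, hmem⟩ ?_) (hzero ▸ le_csSup hbdd hmem)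
      rintro _ ⟨t, ht, rfl⟩
      refine (fib_le_youngBound_sub_div hα hη h3 hN.le hA hB ht).trans ?_
      rw [heq, sub_self, zero_div]
    exact ⟨hsup, hzero.trans hsup.symm⟩
  · obtain ⟨δ, hδ, hle⟩ := exists_pos_fib_le_neg hα h2 h3 hN.le hA hB hgt
    refine (csSup_le ⟨_, hmem⟩ ?_).trans_lt (neg_neg_of_pos hδ)
    rintro _ ⟨t, ht, rfl⟩
    exact hle t ht
end

section
/- Let X be a real normed space, fix real numbers α, η, β with 1 < α < η < β and a constant C > 0, and let N, A, B : X → ℝ satisfy C⁻¹‖u‖^η ≤ N(u) ≤ C‖u‖^η, |A(u)| ≤ C‖u‖^α and |B(u)| ≤ C‖u‖^β for all u ∈ X. Fix c < 0. Then there exist R > 0 and δ > 0, depending only on α, η, β, C and c, such that every u ∈ X with A(u) > 0 satisfying the Nehari equation ((η−α)/η)N(u) − ((β−α)/β)B(u) + α·c = 0 together with (η−α)N(u) > (β−α)B(u) has ‖u‖ ≤ R and λ(c,u) ≥ δ, where λ(c,u) = (N(u)/η − B(u)/β − c)/(A(u)/α). In particular the Nehari set N_c⁺ is bounded and λ(c,·)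 is positive and bounded away from zero on it. -/
/-- Under the growth conditions `C⁻¹‖u‖^η ≤ N(u) ≤ C‖u‖^η`,
`|A(u)| ≤ C‖u‖^α`, `|B(u)| ≤ C‖u‖^β` (`1 < α < η < β`) and for fixed `c < 0`,
there are `R, δ > 0` such that every `u` with `A(u) > 0` on the Nehari set
(`((η−α)/η)N(u) − ((β−α)/β)B(u) + αc = 0`) with `(η−α)N(u) > (β−α)B(u)`
satisfies `‖u‖ ≤ R` and `λ(c,u) ≥ δ`: the set `N_c⁺` is bounded and `λ(c,·)` is
positive and bounded away from zero on it. -/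
theorem stmt13 {X : Type*} [NormedAddCommGroup X] [NormedSpace ℝ X]
    (α η β C : ℝ) (h1 : 1 < α) (h2 : α < η) (h3 : η < β) (hC : 0 < C)
    (N A B : X → ℝ)
    (hNlow : ∀ u : X, C⁻¹ * ‖u‖ ^ η ≤ N u) (hNup : ∀ u : X, N u ≤ C * ‖u‖ ^ η)
    (hA : ∀ u : X, |A u| ≤ C * ‖u‖ ^ α)
    (hB : ∀ u : X, |B u| ≤ C * ‖u‖ ^ β)
    (c : ℝ) (hc : c < 0) :
    ∃ R δ : ℝ, 0 < R ∧ 0 < δ ∧ ∀ u : X, 0 < A u →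
      (η - α) / η * N u - (β - α) / β * B u + α * c = 0 →
      (β - α) * B u < (η - α) * N u →
      ‖u‖ ≤ R ∧ δ ≤ (N u / η - B u / β - c) / (A u / α) := by
  have hα0 : (0:ℝ) < α := by linarith
  have hη0 : (0:ℝ) < η := by linarith
  have hβ0 : (0:ℝ) < β := by linarith
  have hηα : (0:ℝ) < η - α := by linarith
  have hβη : (0:ℝ) < β - η := by linarith
  have hβα : (0:ℝ) < β - α := by linarith
  set K : ℝ := η * α * β * (-c) / ((η - α) * (β - η)) with hK
  have hc' : (0:ℝ) < -c := by linarith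
  have hK0 : 0 < K := div_pos (by positivity) (by positivity)
  set R : ℝ := (C * K) ^ (1/η) with hR
  have hR0 : 0 < R := Real.rpow_pos_of_pos (mul_pos hC hK0) _
  set P : ℝ := α * β * (-c) / (β - α) with hP
  have hP0 : 0 < P := div_pos (by positivity) hβα
  set δ : ℝ := P / (C * R ^ α) with hδ
  have hδ0 : 0 < δ := by positivity
  refine ⟨R, δ, hR0, hδ0, fun u hAu hNeh hlt => ?_⟩
  have hη' : η ≠ 0 := ne_of_gt hη0
  have hβ' : β ≠ 0 := ne_of_gt hβ0
  have hα' : α ≠ 0 := ne_of_gt hα0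
  have key : β * (η - α) * N u - η * (β - α) * B u + η * β * (α * c) = 0 := by
    have h := hNeh
    field_simp at h
    linarith
  -- bound on N u
  have hNK : N u ≤ K := by
    rw [hK, le_div_iff₀ (by positivity)]
    nlinarith [hlt]
  have hNnn : 0 ≤ N u := le_trans (by positivity) (hNlow u)
  have hnorm : ‖u‖ ^ η ≤ C * K := by
    have := hNlow u
    have : ‖u‖ ^ η ≤ C * N u := by
      rw [← inv_mul_le_iff₀ hC] ; exact this
    nlinarith
  have hRu : ‖u‖ ≤ R := by
    have h1' : (‖u‖ ^ η) ^ (1/η) ≤ (C * K) ^ (1/η) :=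
      Real.rpow_le_rpow (by positivity) hnorm (by positivity)
    rwa [← Real.rpow_mul (norm_nonneg u), mul_one_div, div_self hη', Real.rpow_one] at h1'
  refine ⟨hRu, ?_⟩
  -- numerator identity
  have hnum : N u / η - B u / β - c = (N u - B u) / α := by
    field_simp
    nlinarith [key]
  -- lower bound N u - B u ≥ P
  have hNB : P ≤ N u - B u := by
    rw [hP, div_le_iff₀ hβα]
    have hx : η * ((N u - B u) * (β - α) - α * β * (-c)) =
        α * (β - η) * N u + (β * (η - α) * N u - η * (β - α) * B u + η * β * (α * c)) := by
      ring
    have h0 : 0 ≤ η * ((N u - B u) * (β - α) - α * β * (-c)) := by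
      rw [hx, key]
      have := mul_nonneg (mul_nonneg hα0.le hβη.le) hNnn
      linarith
    have h0' := (mul_nonneg_iff_of_pos_left hη0).mp h0
    linarith
  have hAle : A u ≤ C * R ^ α := by
    have h1' := le_trans (le_abs_self _) (hA u)
    have h2' : ‖u‖ ^ α ≤ R ^ α :=
      Real.rpow_le_rpow (norm_nonneg u) hRu (le_of_lt hα0)
    exact le_trans h1' (mul_le_mul_of_nonneg_left h2' hC.le)
  have hdiveq : (N u - B u) / α / (A u / α) = (N u - B u) / A u := by
    have hA' : A u ≠ 0 := ne_of_gt hAu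
    field_simp
  rw [hnum, hdiveq, hδ]
  exact div_le_div₀ (by linarith) hNB (by positivity) hAle
end

section
/- Let X be a real normed space, fix real numbers α, η, β with 1 < α < η < β and a constant C > 0, and let N, A, B : X → ℝ satisfy C⁻¹‖u‖^η ≤ N(u) ≤ C‖u‖^η, |A(u)| ≤ C‖u‖^α and |B(u)| ≤ C‖u‖^β for all u ∈ X. Fix c ∈ ℝ. If (u_n) is a sequence in X such that A(u_n) > 0 and ((η−α)/η)N(u_n) − ((β−α)/β)B(u_n) + α·c = 0 for every n, and ‖u_n‖ → ∞, then λ(c,u_n) = (N(u_n)/η − B(u_n)/β − c)/(A(u_n)/α) → ∞. -/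
/-!
On the Nehari set the equation eliminates `B`: the numerator of `λ(c, u)` equals
`k N(u) - m` with `k = (β - η) / (η (β - α)) > 0` and `m = c β / (β - α)`. The lower bound on
`N` makes it grow at least like `‖u‖ ^ η`, while the denominator `A(u) / α` is positive and at
most `(C / α) ‖u‖ ^ α`, and `α < η`.
-/

open Filter

lemma nehari_numerator_eq {α η β c n b : ℝ} (hη : η ≠ 0) (hβ : β ≠ 0) (hβα : β - α ≠ 0)
    (h : (η - α) / η * n - (β - α) / β * b + α * c = 0) :
    n / η - b / β - c = (β - η) / (η * (β - α)) * n - c * β / (β - α) := by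
  field_simp at h ⊢
  linear_combination h

section RpowGrowth

variable {ι : Type*} {l : Filter ι} {t : ι → ℝ} {a b m p q : ℝ}

lemma tendsto_rpow_sub_div_rpow_atTop (ht : Tendsto t l atTop) (ha : 0 < a) (hb : 0 < b)
    (hp : 0 < p) (hpq : p < q) :
    Tendsto (fun i => (a * t i ^ q - m) / (b * t i ^ p)) l atTop := by
  have hmain : Tendsto (fun i => a / b * t i ^ (q - p)) l atTop :=
    ((tendsto_rpow_atTop (sub_pos.mpr hpq)).comp ht).const_mul_atTop (div_pos ha hb)
  have hrest : Tendsto (fun i => -(m / b * t i ^ (-p))) l (nhds 0) := by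
    simpa using (((tendsto_rpow_neg_atTop hp).comp ht).const_mul (m / b)).neg
  refine (hmain.atTop_add hrest).congr' ?_
  filter_upwards [ht.eventually_gt_atTop 0] with i hti
  rw [Real.rpow_sub hti, Real.rpow_neg hti.le]
  field_simp
  ring

lemma tendsto_div_atTop_of_rpow_bounds {f g : ι → ℝ} (ht : Tendsto t l atTop) (ha : 0 < a)
    (hb : 0 < b) (hp : 0 < p) (hpq : p < q) (hf : ∀ᶠ i in l, a * t i ^ q - m ≤ f i)
    (hg_pos : ∀ᶠ i in l, 0 < g i) (hg : ∀ᶠ i in l, g i ≤ b * t i ^ p) :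
    Tendsto (fun i => f i / g i) l atTop := by
  have hlower_nonneg : ∀ᶠ i in l, 0 ≤ a * t i ^ q - m := by
    have := ((tendsto_rpow_atTop (hp.trans hpq)).comp ht).const_mul_atTop ha
    simpa only [sub_nonneg, Function.comp_apply] using this.eventually_ge_atTop m
  refine tendsto_atTop_mono' l ?_ (tendsto_rpow_sub_div_rpow_atTop (m := m) ht ha hb hp hpq)
  filter_upwards [hf, hg_pos, hg, hlower_nonneg] with i hfi hgi hgi' hi
  exact div_le_div₀ (hi.trans hfi) hfi hgi hgi'

end RpowGrowth

theorem stmt14_general {X : Type*} [NormedAddCommGroup X] [NormedSpace ℝ X]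
    (α η β C : ℝ) (h1 : 1 < α) (h2 : α < η) (h3 : η < β) (hC : 0 < C)
    (N A B : X → ℝ)
    (hNlow : ∀ u : X, C⁻¹ * ‖u‖ ^ η ≤ N u)
    (hA : ∀ u : X, |A u| ≤ C * ‖u‖ ^ α)
    (c : ℝ) (u : ℕ → X)
    (hApos : ∀ n : ℕ, 0 < A (u n))
    (hNeh : ∀ n : ℕ, (η - α) / η * N (u n) - (β - α) / β * B (u n) + α * c = 0)
    (hnorm : Tendsto (fun n => ‖u n‖) atTop atTop) :
    Tendsto (fun n => (N (u n) / η - B (u n) / β - c) / (A (u n) / α)) atTop atTop := by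
  have hα : 0 < α := by linarith
  have hη : 0 < η := by linarith
  simp_rw [fun n => nehari_numerator_eq hη.ne' (by linarith) (by linarith) (hNeh n)]
  set k := (β - η) / (η * (β - α))
  have hk : 0 < k := div_pos (by linarith) (mul_pos hη (by linarith))
  refine tendsto_div_atTop_of_rpow_bounds (a := k * C⁻¹) (m := c * β / (β - α)) (b := C / α) hnorm
    (mul_pos hk (inv_pos.mpr hC)) (div_pos hC hα) hα h2 ?_ ?_ ?_
  · refine .of_forall fun n => ?_
    rw [mul_assoc]
    gcongr
    exact hNlow (u n)
  · exact .of_forall fun n => div_pos (hApos n) hα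
  · refine .of_forall fun n => ?_
    rw [div_mul_eq_mul_div]
    gcongr
    exact (le_abs_self _).trans (hA (u n))

/-- Under the growth conditions `C⁻¹‖u‖^η ≤ N(u) ≤ C‖u‖^η`,
`|A(u)| ≤ C‖u‖^α`, `|B(u)| ≤ C‖u‖^β` (`1 < α < η < β`) and fixed `c`, if `(u_n)`
lies in the Nehari set with `A(u_n) > 0` and `‖u_n‖ → ∞`, then
`λ(c, u_n) = (N(u_n)/η − B(u_n)/β − c)/(A(u_n)/α) → ∞`. -/
theorem stmt14 {X : Type*} [NormedAddCommGroup X] [NormedSpace ℝ X]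
    (α η β C : ℝ) (h1 : 1 < α) (h2 : α < η) (h3 : η < β) (hC : 0 < C)
    (N A B : X → ℝ)
    (hNlow : ∀ u : X, C⁻¹ * ‖u‖ ^ η ≤ N u) (hNup : ∀ u : X, N u ≤ C * ‖u‖ ^ η)
    (hA : ∀ u : X, |A u| ≤ C * ‖u‖ ^ α)
    (hB : ∀ u : X, |B u| ≤ C * ‖u‖ ^ β)
    (c : ℝ) (u : ℕ → X)
    (hApos : ∀ n : ℕ, 0 < A (u n))
    (hNeh : ∀ n : ℕ, (η - α) / η * N (u n) - (β - α) / β * B (u n) + α * c = 0)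
    (hnorm : Tendsto (fun n => ‖u n‖) atTop atTop) :
    Tendsto (fun n => (N (u n) / η - B (u n) / β - c) / (A (u n) / α)) atTop atTop :=
  stmt14_general α η β C h1 h2 h3 hC N A B hNlow hA c u hApos hNeh hnorm
end

section
/- Let X be a real normed space and fix real numbers η, β with 1 < η < β and a constant C > 0. Let N, B : X → ℝ be positively homogeneous of degrees η and β respectively (N(su) = s^η N(u) and B(su) = s^β B(u) for all s > 0, u ∈ X) and satisfy C⁻¹‖u‖^η ≤ N(u) ≤ C‖u‖^η and |B(u)| ≤ C‖u‖^β for all u ∈ X. Assume: every bounded sequence in X has a subsequence converging in the weak topology of X; N is sequentially weakly lower semicontinuous; B is sequentially weakly continuous; and there exists u ∈ X with B(u) > 0. Then there exists w ∈ X with ‖w‖ = 1 and B(w) > 0 such that c₀(w) ≤ c₀(u) for every u ∈ X with B(u) > 0, where c₀(u) = ((β−η)/(ηβ)) · N(u)^{β/(β−η)}/B(u)^{η/(β−η)}; that is, the infimum of c₀ over {u : B(u) > 0} is achieved. -/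
open Filter Topology

/-- A sequence converges weakly (in the weak topology of `X`) iff every continuous
linear functional of it converges. -/
def WeaklyConvergesTo {X : Type*} [NormedAddCommGroup X] [NormedSpace ℝ X]
    (u : ℕ → X) (l : X) : Prop :=
  ∀ f : X →L[ℝ] ℝ, Tendsto (fun n => f (u n)) atTop (𝓝 (f l))

/-- Let `N, B` be positively homogeneous of degrees `η, β`
(`1 < η < β`) with `C⁻¹‖u‖^η ≤ N(u) ≤ C‖u‖^η`, `|B(u)| ≤ C‖u‖^β`. If bounded
sequences have weakly convergent subsequences, `N` is sequentially weakly lower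
semicontinuous, `B` is sequentially weakly continuous, and `B > 0` somewhere,
then the infimum of `c₀(u) = ((β−η)/(ηβ))·N(u)^{β/(β−η)}/B(u)^{η/(β−η)}` over
`{B > 0}` is achieved at some `w` with `‖w‖ = 1` and `B(w) > 0`. -/
theorem stmt15 {X : Type*} [NormedAddCommGroup X] [NormedSpace ℝ X]
    (η β C : ℝ) (h2 : 1 < η) (h3 : η < β) (hC : 0 < C)
    (N B : X → ℝ)
    (hNh : ∀ s : ℝ, 0 < s → ∀ u : X, N (s • u) = s ^ η * N u)
    (hBh : ∀ s : ℝ, 0 < s → ∀ u : X, B (s • u) = s ^ β * B u)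
    (hNlow : ∀ u : X, C⁻¹ * ‖u‖ ^ η ≤ N u) (hNup : ∀ u : X, N u ≤ C * ‖u‖ ^ η)
    (hBgr : ∀ u : X, |B u| ≤ C * ‖u‖ ^ β)
    (hrefl : ∀ u : ℕ → X, (∃ R : ℝ, ∀ n, ‖u n‖ ≤ R) →
      ∃ φ : ℕ → ℕ, StrictMono φ ∧ ∃ l : X, WeaklyConvergesTo (u ∘ φ) l)
    (hNwlsc : ∀ (u : ℕ → X) (l : X), WeaklyConvergesTo u l →
      N l ≤ liminf (fun n => N (u n)) atTop)
    (hBwc : ∀ (u : ℕ → X) (l : X), WeaklyConvergesTo u l →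
      Tendsto (fun n => B (u n)) atTop (𝓝 (B l)))
    (hex : ∃ u : X, 0 < B u) :
    ∃ w : X, ‖w‖ = 1 ∧ 0 < B w ∧ ∀ u : X, 0 < B u →
      (β - η) / (η * β) * ((N w) ^ (β / (β - η)) / (B w) ^ (η / (β - η))) ≤
      (β - η) / (η * β) * ((N u) ^ (β / (β - η)) / (B u) ^ (η / (β - η))) := by
  obtain ⟨u₀, hu₀⟩ := hex
  have hβη : 0 < β - η := sub_pos.mpr h3
  have hη : 0 < η := lt_trans one_pos h2
  have hβ : 0 < β := hη.trans h3
  set p := β / (β - η) with hp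
  set q := η / (β - η) with hq
  have hp0 : 0 < p := div_pos hβ hβη
  have hq0 : 0 < q := div_pos hη hβη
  have hNnn : ∀ u : X, 0 ≤ N u := fun u =>
    le_trans (by positivity) (hNlow u)
  have hB0 : B (0 : X) = 0 := by
    have h := hBgr (0 : X)
    rw [norm_zero, Real.zero_rpow hβ.ne', mul_zero] at h
    exact abs_nonpos_iff.mp h
  set g : X → ℝ := fun u => N u ^ p / B u ^ q with hg
  have hgscale : ∀ s : ℝ, 0 < s → ∀ u : X, 0 < B u → g (s • u) = g u := by
    intro s hs u hBu
    have hsη : (0:ℝ) ≤ s ^ η := (Real.rpow_pos_of_pos hs η).le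
    have hsβ : (0:ℝ) ≤ s ^ β := (Real.rpow_pos_of_pos hs β).le
    simp only [hg]
    rw [hNh s hs u, hBh s hs u, Real.mul_rpow hsη (hNnn u),
      Real.mul_rpow hsβ hBu.le, ← Real.rpow_mul hs.le, ← Real.rpow_mul hs.le]
    have hexp : η * p = β * q := by rw [hp, hq]; ring
    rw [hexp, mul_div_mul_left _ _ (Real.rpow_pos_of_pos hs (β * q)).ne']
  have hnormpos : ∀ u : X, 0 < B u → 0 < ‖u‖ := by
    intro u hu
    rcases eq_or_ne u 0 with rfl | h
    · rw [hB0] at hu; exact absurd hu (lt_irrefl 0)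
    · exact norm_pos_iff.mpr h
  have hnB : ∀ u : X, 0 < B u → ‖(‖u‖⁻¹ • u)‖ = 1 ∧ 0 < B (‖u‖⁻¹ • u) := by
    intro u hu
    have h0 := hnormpos u hu
    refine ⟨?_, ?_⟩
    · rw [norm_smul, norm_inv, norm_norm, inv_mul_cancel₀ h0.ne']
    · rw [hBh _ (inv_pos.mpr h0)]
      exact mul_pos (Real.rpow_pos_of_pos (inv_pos.mpr h0) β) hu
  set S : Set ℝ := g '' {u : X | ‖u‖ = 1 ∧ 0 < B u} with hS
  have hSne : S.Nonempty := ⟨g (‖u₀‖⁻¹ • u₀), ⟨_, ⟨(hnB u₀ hu₀).1, (hnB u₀ hu₀).2⟩, rfl⟩⟩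
  have hgnn : ∀ v : X, 0 < B v → 0 ≤ g v := by
    intro v hv
    exact div_nonneg (Real.rpow_nonneg (hNnn v) p) (Real.rpow_nonneg hv.le q)
  have hSbdd : BddBelow S := by
    refine ⟨0, ?_⟩
    rintro x ⟨v, ⟨hv1, hv2⟩, rfl⟩
    exact hgnn v hv2
  set m := sInf S with hm
  have hm0 : 0 ≤ m := by
    refine le_csInf hSne ?_
    rintro x ⟨v, ⟨hv1, hv2⟩, rfl⟩
    exact hgnn v hv2
  have hseq : ∀ n : ℕ, ∃ v : X, ‖v‖ = 1 ∧ 0 < B v ∧ g v < m + 1 / (n + 1) := by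
    intro n
    obtain ⟨a, ⟨v, ⟨hv1, hv2⟩, rfl⟩, ha⟩ :=
      Real.lt_sInf_add_pos hSne (by positivity : (0:ℝ) < 1 / (n + 1))
    exact ⟨v, hv1, hv2, ha⟩
  choose v hv1 hv2 hv3 using hseq
  have hmem : ∀ n, m ≤ g (v n) := fun n => csInf_le hSbdd ⟨v n, ⟨hv1 n, hv2 n⟩, rfl⟩
  have hgv_tendsto : Tendsto (fun n => g (v n)) atTop (𝓝 m) := by
    have h1 : Tendsto (fun n : ℕ => m + 1 / ((n : ℝ) + 1)) atTop (𝓝 m) := by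
      have := (tendsto_const_nhds : Tendsto (fun _ : ℕ => m) atTop (𝓝 m)).add
        tendsto_one_div_add_atTop_nhds_zero_nat
      simpa using this
    exact tendsto_of_tendsto_of_tendsto_of_le_of_le tendsto_const_nhds h1
      hmem (fun n => (hv3 n).le)
  obtain ⟨φ, hφ, l, hwl⟩ := hrefl v ⟨1, fun n => (hv1 n).le⟩
  have hgφ : Tendsto (fun n => g (v (φ n))) atTop (𝓝 m) :=
    hgv_tendsto.comp hφ.tendsto_atTop
  have hBφ : Tendsto (fun n => B (v (φ n))) atTop (𝓝 (B l)) := hBwc (v ∘ φ) l hwl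
  have hNv : ∀ n, C⁻¹ ≤ N (v n) := by
    intro n
    have := hNlow (v n)
    rwa [hv1 n, Real.one_rpow, mul_one] at this
  have hm1 : (0:ℝ) < m + 1 := by linarith
  have hεpos : (0:ℝ) < (C⁻¹ ^ p / (m + 1)) ^ (1 / q) :=
    Real.rpow_pos_of_pos (div_pos (Real.rpow_pos_of_pos (inv_pos.mpr hC) p) hm1) _
  have hBlb : ∀ n, (C⁻¹ ^ p / (m + 1)) ^ (1 / q) ≤ B (v n) := by
    intro n
    have hBq : (0:ℝ) < B (v n) ^ q := Real.rpow_pos_of_pos (hv2 n) q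
    have hN : C⁻¹ ^ p ≤ N (v n) ^ p :=
      Real.rpow_le_rpow (inv_pos.mpr hC).le (hNv n) hp0.le
    have hglt : g (v n) < m + 1 := by
      refine lt_of_lt_of_le (hv3 n) ?_
      have h1 : (1:ℝ) / ((n : ℝ) + 1) ≤ 1 := by
        rw [div_le_one (by positivity)]
        linarith [Nat.cast_nonneg (α := ℝ) n]
      linarith
    have h1 : N (v n) ^ p < (m + 1) * B (v n) ^ q := by
      have := hglt
      simp only [hg] at this
      exact (div_lt_iff₀ hBq).mp this
    have h2 : C⁻¹ ^ p / (m + 1) ≤ B (v n) ^ q := by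
      rw [div_le_iff₀ hm1]
      calc C⁻¹ ^ p ≤ N (v n) ^ p := hN
        _ ≤ (m + 1) * B (v n) ^ q := h1.le
        _ = B (v n) ^ q * (m + 1) := mul_comm _ _
    calc (C⁻¹ ^ p / (m + 1)) ^ (1 / q)
        ≤ (B (v n) ^ q) ^ (1 / q) := by
          refine Real.rpow_le_rpow ?_ h2 (by positivity)
          exact div_nonneg (Real.rpow_nonneg (inv_pos.mpr hC).le p) hm1.le
      _ = B (v n) := by
          rw [← Real.rpow_mul (hv2 n).le, mul_one_div, div_self hq0.ne',
            Real.rpow_one]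
  have hBl : 0 < B l :=
    lt_of_lt_of_le hεpos (ge_of_tendsto' hBφ (fun n => hBlb (φ n)))
  have hBlq : (0:ℝ) < B l ^ q := Real.rpow_pos_of_pos hBl q
  have hBφq : Tendsto (fun n => B (v (φ n)) ^ q) atTop (𝓝 (B l ^ q)) :=
    (Real.continuousAt_rpow_const _ q (Or.inl hBl.ne')).tendsto.comp hBφ
  have hNpφ : Tendsto (fun n => N (v (φ n)) ^ p) atTop (𝓝 (m * B l ^ q)) := by
    refine (hgφ.mul hBφq).congr fun n => ?_
    simp only [hg]
    rw [div_mul_cancel₀ _ (Real.rpow_pos_of_pos (hv2 (φ n)) q).ne']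
  have hAnn : (0:ℝ) ≤ m * B l ^ q := mul_nonneg hm0 hBlq.le
  have hNφ : Tendsto (fun n => N (v (φ n))) atTop
      (𝓝 ((m * B l ^ q) ^ (1 / p))) := by
    have hc : ContinuousAt (fun x : ℝ => x ^ (1 / p)) (m * B l ^ q) :=
      Real.continuousAt_rpow_const _ _ (Or.inr (by positivity))
    refine (hc.tendsto.comp hNpφ).congr fun n => ?_
    simp only [Function.comp_apply]
    rw [← Real.rpow_mul (hNnn _), mul_one_div, div_self hp0.ne', Real.rpow_one]
  have hNl : N l ≤ (m * B l ^ q) ^ (1 / p) := by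
    have h := hNwlsc (v ∘ φ) l hwl
    simp only [Function.comp_apply] at h
    rwa [hNφ.liminf_eq] at h
  have hgl : g l ≤ m := by
    have h1 : N l ^ p ≤ m * B l ^ q := by
      calc N l ^ p ≤ ((m * B l ^ q) ^ (1 / p)) ^ p :=
            Real.rpow_le_rpow (hNnn l) hNl hp0.le
        _ = m * B l ^ q := by
            rw [← Real.rpow_mul hAnn, one_div_mul_cancel hp0.ne', Real.rpow_one]
    simp only [hg]
    rw [div_le_iff₀ hBlq]
    exact h1
  have hl0 : 0 < ‖l‖ := hnormpos l hBl
  refine ⟨‖l‖⁻¹ • l, (hnB l hBl).1, (hnB l hBl).2, ?_⟩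
  intro u hu
  have hK : (0:ℝ) ≤ (β - η) / (η * β) := by positivity
  refine mul_le_mul_of_nonneg_left ?_ hK
  have h1 : g (‖l‖⁻¹ • l) = g l := hgscale _ (inv_pos.mpr hl0) l hBl
  have h2 : g (‖u‖⁻¹ • u) = g u := hgscale _ (inv_pos.mpr (hnormpos u hu)) u hu
  have h3 : m ≤ g (‖u‖⁻¹ • u) :=
    csInf_le hSbdd ⟨_, ⟨(hnB u hu).1, (hnB u hu).2⟩, rfl⟩
  calc N (‖l‖⁻¹ • l) ^ p / B (‖l‖⁻¹ • l) ^ q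
      = g (‖l‖⁻¹ • l) := by simp only [hg]
    _ = g l := h1
    _ ≤ m := hgl
    _ ≤ g (‖u‖⁻¹ • u) := h3
    _ = g u := h2
    _ = N u ^ p / B u ^ q := by simp only [hg]
end

section
/- Let X be a real normed space and fix real numbers η, β with 1 < η < β and a constant C > 0. Let N, B : X → ℝ be positively homogeneous of degrees η and β respectively (N(su) = s^η N(u) and B(su) = s^β B(u) for all s > 0, u ∈ X) and satisfy C⁻¹‖u‖^η ≤ N(u) ≤ C‖u‖^η and |B(u)| ≤ C‖u‖^β for all u ∈ X. Assume: every bounded sequence in X has a subsequence converging in the weak topology of X; N is sequentially weakly lower semicontinuous; B is sequentially weakly continuous; and there exists u ∈ X with B(u) > 0. Let m = inf{c₀(u) : B(u) > 0} and M = {w ∈ X : ‖w‖ = 1, B(w) > 0, c₀(w) = m}. Then M is nonempty, and every sequence (u_n) ⊂ M has a subsequence converging weakly to some u ∈ X satisfying u ≠ 0, B(u) > 0 and c₀(u) = m (so that u/‖u‖ ∈ M). -/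
/-! Normalize a minimizing sequence (or take a sequence in `M`) to the unit sphere and pass
to a weakly convergent subsequence. Along it `N` stays above `C⁻¹` while
`c₀ = K N^p / B^q` (with `K, p, q > 0`) tends to `m`, which
forces `B` to have a positive limit `B(l)` and `N` to converge to the value `ν` with
`c₀ = m` at `(ν, B(l))`. Weak lower semicontinuity gives `N(l) ≤ ν`, and since `c₀` is
increasing in `N`, `c₀(l) ≤ m`; minimality of `m` gives equality. -/

open Filter Topology

/-- `fiberingLevel η β (N u) (B u)` is the paper's `c₀(u)`, the maximum over `t > 0` of
`t ^ η * N u / η - t ^ β * B u / β`. -/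
noncomputable def fiberingLevel (η β n b : ℝ) : ℝ :=
  (β - η) / (η * β) * (n ^ (β / (β - η)) / b ^ (η / (β - η)))

section fiberingLevel

variable {η β n b : ℝ}

lemma fiberingLevel_nonneg (hη : 0 < η) (hηβ : η < β) (hn : 0 ≤ n) (hb : 0 ≤ b) :
    0 ≤ fiberingLevel η β n b := by
  have : 0 < β - η := sub_pos.2 hηβ
  have : 0 < β := hη.trans hηβ
  unfold fiberingLevel
  positivity

lemma fiberingLevel_mono (hη : 0 < η) (hηβ : η < β) {n' : ℝ} (hn : 0 ≤ n) (hnn' : n ≤ n')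
    (hb : 0 ≤ b) : fiberingLevel η β n b ≤ fiberingLevel η β n' b := by
  have : 0 < β - η := sub_pos.2 hηβ
  have : 0 < β := hη.trans hηβ
  unfold fiberingLevel
  gcongr

lemma fiberingLevel_rpow_mul {s : ℝ} (hs : 0 < s) (hn : 0 ≤ n) (hb : 0 ≤ b) :
    fiberingLevel η β (s ^ η * n) (s ^ β * b) = fiberingLevel η β n b := by
  have hexp : η * (β / (β - η)) = β * (η / (β - η)) := by ring
  unfold fiberingLevel
  rw [Real.mul_rpow (by positivity) hn, Real.mul_rpow (by positivity) hb,
    ← Real.rpow_mul hs.le, ← Real.rpow_mul hs.le, hexp,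
    mul_div_mul_left _ _ (Real.rpow_pos_of_pos hs _).ne']

lemma fiberingLevel_mul_rpow_div (hη : 0 < η) (hηβ : η < β) (hb : 0 < b) :
    fiberingLevel η β n b * b ^ (η / (β - η)) / ((β - η) / (η * β)) = n ^ (β / (β - η)) := by
  have : 0 < β - η := sub_pos.2 hηβ
  have : 0 < β := hη.trans hηβ
  have : 0 < b ^ (η / (β - η)) := Real.rpow_pos_of_pos hb _
  unfold fiberingLevel
  field_simp

/-- Inverting the level gives `n k` as a continuous function of the level and `b k`; it would
tend to `0` if `b₀ = 0`, which `δ ≤ n k` forbids. -/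
theorem tendsto_of_tendsto_fiberingLevel (hη : 0 < η) (hηβ : η < β) {n b : ℕ → ℝ}
    {c b₀ δ : ℝ} (hδ : 0 < δ) (hn : ∀ k, δ ≤ n k) (hb : ∀ k, 0 < b k)
    (hb₀ : Tendsto b atTop (𝓝 b₀))
    (hc : Tendsto (fun k => fiberingLevel η β (n k) (b k)) atTop (𝓝 c)) :
    0 < b₀ ∧ ∃ ν, Tendsto n atTop (𝓝 ν) ∧ fiberingLevel η β ν b₀ = c := by
  have hβη : 0 < β - η := sub_pos.2 hηβ
  have hp : 0 < β / (β - η) := div_pos (hη.trans hηβ) hβη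
  have hq : 0 < η / (β - η) := div_pos hη hβη
  set ν := (c * b₀ ^ (η / (β - η)) / ((β - η) / (η * β))) ^ (β / (β - η))⁻¹
  have hν : Tendsto n atTop (𝓝 ν) := by
    refine (((hc.mul (hb₀.rpow_const (Or.inr hq.le))).div_const _).rpow_const
      (Or.inr (inv_nonneg.2 hp.le))).congr fun k => ?_
    rw [fiberingLevel_mul_rpow_div hη hηβ (hb k),
      Real.rpow_rpow_inv (hδ.le.trans (hn k)) hp.ne']
  have hb₀pos : 0 < b₀ := by
    refine (ge_of_tendsto' hb₀ fun k => (hb k).le).lt_of_ne' fun hb₀0 => ?_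
    have hν0 : ν = 0 := by
      simp only [ν, hb₀0, Real.zero_rpow hq.ne', mul_zero, zero_div,
        Real.zero_rpow (inv_ne_zero hp.ne')]
    exact (hδ.trans_le (ge_of_tendsto' hν hn)).ne' hν0
  refine ⟨hb₀pos, ν, hν, tendsto_nhds_unique ?_ hc⟩
  exact (((hν.rpow_const (Or.inr hp.le)).div (hb₀.rpow_const (Or.inr hq.le))
    (Real.rpow_pos_of_pos hb₀pos _).ne').const_mul _)

end fiberingLevel

lemma bddBelow_fiberingLevel {η β : ℝ} (hη : 0 < η) (hηβ : η < β) {X : Type*} {N B : X → ℝ} (hN : ∀ u, 0 ≤ N u) :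
    BddBelow {x : ℝ | ∃ u : X, 0 < B u ∧ x = fiberingLevel η β (N u) (B u)} := by
  refine ⟨0, ?_⟩
  rintro x ⟨u, hu, rfl⟩
  exact fiberingLevel_nonneg hη hηβ (hN u) hu.le


section Minimization

variable {X : Type*} [NormedAddCommGroup X] [NormedSpace ℝ X] {η β : ℝ} {N B : X → ℝ}

lemma map_zero_of_homogeneous (hβ : 0 < β)
    (hBh : ∀ s : ℝ, 0 < s → ∀ u : X, B (s • u) = s ^ β * B u) : B 0 = 0 := by
  have h := hBh 2 two_pos 0
  rw [smul_zero] at h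
  have h2 : (2 : ℝ) ^ β ≠ 1 := (Real.one_lt_rpow one_lt_two hβ).ne'
  have : ((2 : ℝ) ^ β - 1) * B 0 = 0 := by linarith
  exact (mul_eq_zero.1 this).resolve_left (sub_ne_zero.2 h2)

lemma fiberingLevel_inv_norm_smul
    (hNh : ∀ s : ℝ, 0 < s → ∀ u : X, N (s • u) = s ^ η * N u)
    (hBh : ∀ s : ℝ, 0 < s → ∀ u : X, B (s • u) = s ^ β * B u)
    {v : X} (hv : v ≠ 0) (hN : 0 ≤ N v) (hB : 0 < B v) :
    ‖‖v‖⁻¹ • v‖ = 1 ∧ 0 < B (‖v‖⁻¹ • v) ∧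
      fiberingLevel η β (N (‖v‖⁻¹ • v)) (B (‖v‖⁻¹ • v)) = fiberingLevel η β (N v) (B v) := by
  have hs : 0 < ‖v‖⁻¹ := inv_pos.2 (norm_pos_iff.2 hv)
  refine ⟨norm_smul_inv_norm hv, ?_, ?_⟩
  · rw [hBh _ hs]
    exact mul_pos (Real.rpow_pos_of_pos hs _) hB
  · rw [hNh _ hs, hBh _ hs, fiberingLevel_rpow_mul hs hN hB.le]

lemma exists_unit_minimizing_seq (hη : 0 < η) (hηβ : η < β)
    (hNh : ∀ s : ℝ, 0 < s → ∀ u : X, N (s • u) = s ^ η * N u)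
    (hBh : ∀ s : ℝ, 0 < s → ∀ u : X, B (s • u) = s ^ β * B u)
    (hN : ∀ u, 0 ≤ N u) (hB0 : B 0 = 0) (hex : ∃ u : X, 0 < B u) :
    ∃ w : ℕ → X, (∀ n, ‖w n‖ = 1) ∧ (∀ n, 0 < B (w n)) ∧
      Tendsto (fun n => fiberingLevel η β (N (w n)) (B (w n))) atTop
        (𝓝 (sInf {x : ℝ | ∃ u : X, 0 < B u ∧ x = fiberingLevel η β (N u) (B u)})) := by
  obtain ⟨u₀, hu₀⟩ := hex
  obtain ⟨c, -, hc, hcS⟩ := exists_seq_tendsto_sInf (hS' := bddBelow_fiberingLevel hη hηβ hN)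
    ⟨fiberingLevel η β (N u₀) (B u₀), show ∃ u, _ from ⟨u₀, hu₀, rfl⟩⟩
  choose v hvB hvc using hcS
  have hv0 : ∀ n, v n ≠ 0 := fun n h => (hvB n).ne' (h ▸ hB0)
  have hw := fun n => fiberingLevel_inv_norm_smul hNh hBh (hv0 n) (hN _) (hvB n)
  refine ⟨fun n => ‖v n‖⁻¹ • v n, fun n => (hw n).1, fun n => (hw n).2.1, ?_⟩
  exact hc.congr fun n => by rw [(hw n).2.2, hvc n]

theorem exists_weakLimit_of_minimizing (hη : 0 < η) (hηβ : η < β) {C : ℝ} (hC : 0 < C)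
    (hNlow : ∀ u : X, C⁻¹ * ‖u‖ ^ η ≤ N u) (hN : ∀ u, 0 ≤ N u)
    (hrefl : ∀ u : ℕ → X, (∃ R : ℝ, ∀ n, ‖u n‖ ≤ R) →
      ∃ φ : ℕ → ℕ, StrictMono φ ∧ ∃ l : X, WeaklyConvergesTo (u ∘ φ) l)
    (hNwlsc : ∀ (u : ℕ → X) (l : X), WeaklyConvergesTo u l →
      N l ≤ liminf (fun n => N (u n)) atTop)
    (hBwc : ∀ (u : ℕ → X) (l : X), WeaklyConvergesTo u l →
      Tendsto (fun n => B (u n)) atTop (𝓝 (B l)))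
    {m : ℝ} (hmin : ∀ u, 0 < B u → m ≤ fiberingLevel η β (N u) (B u))
    (w : ℕ → X) (hw1 : ∀ n, ‖w n‖ = 1) (hwB : ∀ n, 0 < B (w n))
    (hwm : Tendsto (fun n => fiberingLevel η β (N (w n)) (B (w n))) atTop (𝓝 m)) :
    ∃ φ : ℕ → ℕ, StrictMono φ ∧ ∃ l : X, WeaklyConvergesTo (w ∘ φ) l ∧
      0 < B l ∧ fiberingLevel η β (N l) (B l) = m := by
  obtain ⟨φ, hφ, l, hl⟩ := hrefl w ⟨1, fun n => (hw1 n).le⟩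
  have hNw : ∀ k, C⁻¹ ≤ N (w (φ k)) := fun k => by
    simpa [hw1] using hNlow (w (φ k))
  obtain ⟨hBl, ν, hν, hνm⟩ := tendsto_of_tendsto_fiberingLevel hη hηβ (inv_pos.2 hC) hNw
    (fun k => hwB _) (hBwc _ _ hl) (hwm.comp hφ.tendsto_atTop)
  have hNl : N l ≤ ν := hν.liminf_eq ▸ hNwlsc _ _ hl
  refine ⟨φ, hφ, l, hl, hBl, le_antisymm ?_ (hmin l hBl)⟩
  exact hνm ▸ fiberingLevel_mono hη hηβ (hN l) hNl hBl.le

end Minimization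

theorem stmt16_general {X : Type*} [NormedAddCommGroup X] [NormedSpace ℝ X]
    (η β C : ℝ) (h2 : 1 < η) (h3 : η < β) (hC : 0 < C)
    (N B : X → ℝ)
    (hNh : ∀ s : ℝ, 0 < s → ∀ u : X, N (s • u) = s ^ η * N u)
    (hBh : ∀ s : ℝ, 0 < s → ∀ u : X, B (s • u) = s ^ β * B u)
    (hNlow : ∀ u : X, C⁻¹ * ‖u‖ ^ η ≤ N u)
    (hrefl : ∀ u : ℕ → X, (∃ R : ℝ, ∀ n, ‖u n‖ ≤ R) →
      ∃ φ : ℕ → ℕ, StrictMono φ ∧ ∃ l : X, WeaklyConvergesTo (u ∘ φ) l)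
    (hNwlsc : ∀ (u : ℕ → X) (l : X), WeaklyConvergesTo u l →
      N l ≤ liminf (fun n => N (u n)) atTop)
    (hBwc : ∀ (u : ℕ → X) (l : X), WeaklyConvergesTo u l →
      Tendsto (fun n => B (u n)) atTop (𝓝 (B l)))
    (hex : ∃ u : X, 0 < B u)
    (m : ℝ)
    (hm : m = sInf {x : ℝ | ∃ u : X, 0 < B u ∧
      x = (β - η) / (η * β) * ((N u) ^ (β / (β - η)) / (B u) ^ (η / (β - η)))})
    (M : Set X)
    (hM : M = {w : X | ‖w‖ = 1 ∧ 0 < B w ∧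
      (β - η) / (η * β) * ((N w) ^ (β / (β - η)) / (B w) ^ (η / (β - η))) = m}) :
    M.Nonempty ∧
    ∀ u : ℕ → X, (∀ n, u n ∈ M) →
      ∃ φ : ℕ → ℕ, StrictMono φ ∧ ∃ l : X, WeaklyConvergesTo (u ∘ φ) l ∧
        l ≠ 0 ∧ 0 < B l ∧
        (β - η) / (η * β) * ((N l) ^ (β / (β - η)) / (B l) ^ (η / (β - η))) = m := by
  have hη : 0 < η := one_pos.trans h2
  have hN : ∀ u, 0 ≤ N u := fun u => (by positivity : 0 ≤ C⁻¹ * ‖u‖ ^ η).trans (hNlow u)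
  have hB0 : B 0 = 0 := map_zero_of_homogeneous (hη.trans h3) hBh
  have hne : ∀ l : X, 0 < B l → l ≠ 0 := fun l hl h => hl.ne' (h ▸ hB0)
  have hmin : ∀ u, 0 < B u → m ≤ fiberingLevel η β (N u) (B u) := fun u hu =>
    hm ▸ csInf_le (bddBelow_fiberingLevel hη h3 hN) ⟨u, hu, rfl⟩
  have key := exists_weakLimit_of_minimizing hη h3 hC hNlow hN hrefl hNwlsc hBwc hmin
  constructor
  · obtain ⟨w, hw1, hwB, hwm⟩ := exists_unit_minimizing_seq hη h3 hNh hBh hN hB0 hex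
    obtain ⟨-, -, l, -, hBl, hlm⟩ := key w hw1 hwB (hm ▸ hwm)
    obtain ⟨h1, hB, hlev⟩ := fiberingLevel_inv_norm_smul hNh hBh (hne l hBl) (hN l) hBl
    exact ⟨‖l‖⁻¹ • l, hM ▸ ⟨h1, hB, hlev.trans hlm⟩⟩
  · intro u hu
    rw [hM] at hu
    obtain ⟨φ, hφ, l, hl, hBl, hlm⟩ := key u (fun n => (hu n).1) (fun n => (hu n).2.1)
      (tendsto_const_nhds.congr fun n => (hu n).2.2.symm)
    exact ⟨φ, hφ, l, hl, hne l hBl, hBl, hlm⟩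

/-- Under the assumptions of Statement 15, with
`m = inf{c₀(u) : B(u) > 0}` and `M = {w : ‖w‖ = 1, B(w) > 0, c₀(w) = m}`,
the set `M` is nonempty and every sequence in `M` has a subsequence converging
weakly to some `u ≠ 0` with `B(u) > 0` and `c₀(u) = m`. -/
theorem stmt16 {X : Type*} [NormedAddCommGroup X] [NormedSpace ℝ X]
    (η β C : ℝ) (h2 : 1 < η) (h3 : η < β) (hC : 0 < C)
    (N B : X → ℝ)
    (hNh : ∀ s : ℝ, 0 < s → ∀ u : X, N (s • u) = s ^ η * N u)
    (hBh : ∀ s : ℝ, 0 < s → ∀ u : X, B (s • u) = s ^ β * B u)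
    (hNlow : ∀ u : X, C⁻¹ * ‖u‖ ^ η ≤ N u) (hNup : ∀ u : X, N u ≤ C * ‖u‖ ^ η)
    (hBgr : ∀ u : X, |B u| ≤ C * ‖u‖ ^ β)
    (hrefl : ∀ u : ℕ → X, (∃ R : ℝ, ∀ n, ‖u n‖ ≤ R) →
      ∃ φ : ℕ → ℕ, StrictMono φ ∧ ∃ l : X, WeaklyConvergesTo (u ∘ φ) l)
    (hNwlsc : ∀ (u : ℕ → X) (l : X), WeaklyConvergesTo u l →
      N l ≤ liminf (fun n => N (u n)) atTop)
    (hBwc : ∀ (u : ℕ → X) (l : X), WeaklyConvergesTo u l →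
      Tendsto (fun n => B (u n)) atTop (𝓝 (B l)))
    (hex : ∃ u : X, 0 < B u)
    (m : ℝ)
    (hm : m = sInf {x : ℝ | ∃ u : X, 0 < B u ∧
      x = (β - η) / (η * β) * ((N u) ^ (β / (β - η)) / (B u) ^ (η / (β - η)))})
    (M : Set X)
    (hM : M = {w : X | ‖w‖ = 1 ∧ 0 < B w ∧
      (β - η) / (η * β) * ((N w) ^ (β / (β - η)) / (B w) ^ (η / (β - η))) = m}) :
    M.Nonempty ∧
    ∀ u : ℕ → X, (∀ n, u n ∈ M) →
      ∃ φ : ℕ → ℕ, StrictMono φ ∧ ∃ l : X, WeaklyConvergesTo (u ∘ φ) l ∧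
        l ≠ 0 ∧ 0 < B l ∧
        (β - η) / (η * β) * ((N l) ^ (β / (β - η)) / (B l) ^ (η / (β - η))) = m :=
  stmt16_general η β C h2 h3 hC N B hNh hBh hNlow hrefl hNwlsc hBwc hex m hm M hM
end

section
/- Let X be a real normed space and let S ⊆ X \ {0} be a symmetric set (u ∈ S implies −u ∈ S). Let a < b be reals, k ≥ 1 an integer, and F : [a,b] × S → ℝ a function such that for each u ∈ S the map c ↦ F(c,u) is nonincreasing on [a,b]. For c ∈ [a,b] let λ_{c,k} be the infimum, over all compact symmetric sets M ⊆ S with Krasnoselskii genus γ(M) ≥ k, of sup_{u∈M} F(c,u) (infima and suprema taken in the extended real numbers), and assume at least one such M exists. If T ∈ ℝ satisfies T > λ_{a,k}, then for every c ∈ [a,b], λ_{c,k} equals the infimum of sup_{u∈M} F(c,u) taken only over those compact symmetric M ⊆ S with γ(M) ≥ k that are contained in the sublevel set {u ∈ S : F(b,u) ≤ T}. -/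
open Filter
open scoped Classical

/-- The Krasnoselskii genus of a set `K ⊆ X \ {0}`: the least `n ≥ 1` for which
there is a continuous odd map from `K` into `ℝⁿ \ {0}`, with `γ(∅) = 0` and
`γ(K) = ∞` if no such `n` exists. -/
noncomputable def genus {X : Type*} [NormedAddCommGroup X] [NormedSpace ℝ X]
    (K : Set X) : ℕ∞ :=
  if K = ∅ then 0
  else sInf {n : ℕ∞ | ∃ m : ℕ, n = (m : ℕ∞) ∧ 1 ≤ m ∧
    ∃ f : X → EuclideanSpace ℝ (Fin m), ContinuousOn f K ∧
      (∀ x ∈ K, f (-x) = -f x) ∧ ∀ x ∈ K, f x ≠ 0}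

/-- The admissible class for the genus-`k` minimax: compact symmetric subsets of
`S` of genus at least `k`. -/
def GoodFamily {X : Type*} [NormedAddCommGroup X] [NormedSpace ℝ X]
    (S : Set X) (k : ℕ) (M : Set X) : Prop :=
  IsCompact M ∧ M ⊆ S ∧ (∀ u ∈ M, -u ∈ M) ∧ (k : ℕ∞) ≤ genus M

/-- Let `S ⊆ X \ {0}` be symmetric, `a < b`, `k ≥ 1`, and
`F : [a,b] × S → ℝ` with `c ↦ F(c,u)` nonincreasing. Let
`λ_{c,k} = inf {sup_{u ∈ M} F(c,u) : M compact symmetric ⊆ S, γ(M) ≥ k}` (in the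
extended reals), the class being nonempty. If `T > λ_{a,k}`, then for every
`c ∈ [a,b]`, `λ_{c,k}` equals the infimum taken only over those admissible `M`
contained in the sublevel set `{u ∈ S : F(b,u) ≤ T}`. -/
theorem stmt17 {X : Type*} [NormedAddCommGroup X] [NormedSpace ℝ X]
    (S : Set X) (hS0 : (0 : X) ∉ S) (hSsym : ∀ u ∈ S, -u ∈ S)
    (a b : ℝ) (hab : a < b) (k : ℕ) (hk : 1 ≤ k)
    (F : ℝ → X → ℝ)
    (hmono : ∀ u ∈ S, ∀ c₁ c₂ : ℝ, a ≤ c₁ → c₁ ≤ c₂ → c₂ ≤ b → F c₂ u ≤ F c₁ u)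
    (hex : ∃ M : Set X, GoodFamily S k M)
    (T : ℝ)
    (hT : sInf {x : EReal | ∃ M : Set X, GoodFamily S k M ∧
        x = ⨆ u ∈ M, ((F a u : ℝ) : EReal)} < (T : EReal)) :
    ∀ c : ℝ, a ≤ c → c ≤ b →
      sInf {x : EReal | ∃ M : Set X, GoodFamily S k M ∧
          x = ⨆ u ∈ M, ((F c u : ℝ) : EReal)} =
      sInf {x : EReal | ∃ M : Set X, GoodFamily S k M ∧
          M ⊆ {u ∈ S | F b u ≤ T} ∧ x = ⨆ u ∈ M, ((F c u : ℝ) : EReal)} := by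
  intro c hac hcb
  -- extract M₀ with sup_{M₀} F(a,·) < T
  obtain ⟨x₀, hx₀mem, hx₀T⟩ := sInf_lt_iff.mp hT
  obtain ⟨M₀, hM₀good, hx₀⟩ := hx₀mem
  subst hx₀
  have hM₀sub : M₀ ⊆ {u ∈ S | F b u ≤ T} := by
    intro u hu
    have hFa : ((F a u : ℝ) : EReal) ≤ ⨆ u ∈ M₀, ((F a u : ℝ) : EReal) :=
      le_biSup (fun u => ((F a u : ℝ) : EReal)) hu
    have hFalt : (F a u : ℝ) < T := by
      exact_mod_cast lt_of_le_of_lt hFa hx₀T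
    have huS : u ∈ S := hM₀good.2.1 hu
    exact ⟨huS, le_trans (hmono u huS a b le_rfl hab.le le_rfl) hFalt.le⟩
  have hM₀c : (⨆ u ∈ M₀, ((F c u : ℝ) : EReal)) < (T : EReal) := by
    refine lt_of_le_of_lt ?_ hx₀T
    refine iSup_mono fun u => iSup_mono fun hu => ?_
    exact_mod_cast hmono u (hM₀good.2.1 hu) a c le_rfl hac hcb
  apply le_antisymm
  · refine sInf_le_sInf ?_
    rintro x ⟨M, hM, _, hx⟩
    exact ⟨M, hM, hx⟩
  · refine le_sInf ?_
    rintro x ⟨M, hM, hx⟩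
    subst hx
    by_cases hcase : (⨆ u ∈ M, ((F c u : ℝ) : EReal)) < (T : EReal)
    · refine sInf_le ⟨M, hM, ?_, rfl⟩
      intro u hu
      have hFc : ((F c u : ℝ) : EReal) ≤ ⨆ u ∈ M, ((F c u : ℝ) : EReal) :=
        le_biSup (fun u => ((F c u : ℝ) : EReal)) hu
      have hFclt : (F c u : ℝ) < T := by
        exact_mod_cast lt_of_le_of_lt hFc hcase
      have huS : u ∈ S := hM.2.1 hu
      exact ⟨huS, le_trans (hmono u huS c b hac hcb le_rfl) hFclt.le⟩
    · push_neg at hcase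
      have h1 : sInf {x : EReal | ∃ M : Set X, GoodFamily S k M ∧
          M ⊆ {u ∈ S | F b u ≤ T} ∧ x = ⨆ u ∈ M, ((F c u : ℝ) : EReal)} ≤
          ⨆ u ∈ M₀, ((F c u : ℝ) : EReal) :=
        sInf_le ⟨M₀, hM₀good, hM₀sub, rfl⟩
      exact h1.trans (hM₀c.le.trans hcase)
end

section
/- Let X be a real normed space, fix real numbers α, η, β with 1 < α < η < β and a constant C > 0, and let N, A, B : X → ℝ satisfy C⁻¹‖u‖^η ≤ N(u) ≤ C‖u‖^η, |A(u)| ≤ C‖u‖^α and |B(u)| ≤ C‖u‖^β for all u ∈ X. Assume condition (C4): for every bounded sequence (u_n) in X with A(u_n) > 0 for all n and A(u_n) → 0, one has B(u_n) → 0. Then for every R > 0 there exists δ > 0 such that every u ∈ X with ‖u‖ ≤ R, A(u) > 0 and (η−α)N(u) < (β−α)B(u) satisfies A(u) ≥ δ; that is, A is bounded away from zero on bounded subsets of the Nehari set N_c⁻. -/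
/-!
On the Nehari set the growth bounds give `C⁻¹‖u‖^η ≲ N(u) ≲ B(u) ≤ C‖u‖^β` with `η < β`, which
forces `‖u‖` away from zero and hence `B(u) ≥ ε > 0`. If `A` were not bounded away from zero on a
bounded part of the Nehari set, a sequence there with `A(u_n) → 0⁺` would by (C4) have
`B(u_n) → 0`, contradicting `B ≥ ε`.
-/

open Filter Topology

lemma rpow_div_sub_lt_rpow_of_mul_rpow_lt_rpow {r κ p q : ℝ} (hr : 0 ≤ r) (hκ : 0 < κ)
    (hp : 0 < p) (hpq : p < q) (h : κ * r ^ p < r ^ q) : κ ^ (p / (q - p)) < r ^ p := by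
  have hqp : 0 < q - p := sub_pos.2 hpq
  have hr : 0 < r := by
    rcases hr.eq_or_lt with rfl | hr
    · simp [Real.zero_rpow hp.ne', Real.zero_rpow (hp.trans hpq).ne'] at h
    · exact hr
  have hκr : κ < r ^ (q - p) := by
    rwa [Real.rpow_sub hr, lt_div_iff₀ (by positivity)]
  calc κ ^ (p / (q - p)) < (r ^ (q - p)) ^ (p / (q - p)) :=
        Real.rpow_lt_rpow hκ.le hκr (div_pos hp hqp)
    _ = r ^ p := by rw [← Real.rpow_mul hr.le, mul_div_cancel₀ _ hqp.ne']

lemma exists_pos_forall_lt_of_mul_lt_mul {X : Type*} [SeminormedAddCommGroup X]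
    {η β C a b : ℝ} (hη : 0 < η) (hηβ : η < β) (hC : 0 < C) (ha : 0 < a) (hb : 0 < b)
    {N B : X → ℝ} (hN : ∀ u, C⁻¹ * ‖u‖ ^ η ≤ N u) (hB : ∀ u, B u ≤ C * ‖u‖ ^ β) :
    ∃ ε > 0, ∀ u, a * N u < b * B u → ε < B u := by
  obtain ⟨κ, hκ⟩ : ∃ κ, κ = a / (b * C ^ 2) := ⟨_, rfl⟩
  have hκpos : 0 < κ := hκ ▸ by positivity
  refine ⟨a / (b * C) * κ ^ (η / (β - η)), by positivity, fun u hu => ?_⟩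
  have hgrowth : κ * ‖u‖ ^ η < ‖u‖ ^ β := by
    have h : a * (C⁻¹ * ‖u‖ ^ η) < b * (C * ‖u‖ ^ β) :=
      calc a * (C⁻¹ * ‖u‖ ^ η) ≤ a * N u := by gcongr; exact hN u
        _ < b * B u := hu
        _ ≤ b * (C * ‖u‖ ^ β) := by gcongr; exact hB u
    calc κ * ‖u‖ ^ η = a * (C⁻¹ * ‖u‖ ^ η) / (b * C) := by
          rw [hκ]; field_simp
      _ < b * (C * ‖u‖ ^ β) / (b * C) := by gcongr
      _ = ‖u‖ ^ β := by field_simp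
  calc a / (b * C) * κ ^ (η / (β - η)) < a / (b * C) * ‖u‖ ^ η := by
        gcongr
        exact rpow_div_sub_lt_rpow_of_mul_rpow_lt_rpow (norm_nonneg u) hκpos hη hηβ
          hgrowth
    _ = a / b * (C⁻¹ * ‖u‖ ^ η) := by field_simp
    _ ≤ a / b * N u := by gcongr; exact hN u
    _ < B u := by rw [div_mul_eq_mul_div, div_lt_iff₀ hb]; linarith

lemma exists_pos_forall_le_of_tendsto_imp {X : Type*} {P : X → Prop} {f g : X → ℝ} {ε : ℝ}
    (hε : 0 < ε) (hf : ∀ u, P u → 0 ≤ f u) (hg : ∀ u, P u → ε < g u)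
    (hfg : ∀ u : ℕ → X, (∀ n, P (u n)) → Tendsto (f ∘ u) atTop (𝓝 0) →
      Tendsto (g ∘ u) atTop (𝓝 0)) :
    ∃ δ > 0, ∀ u, P u → δ ≤ f u := by
  by_contra! h
  choose u hPu hfu using fun n : ℕ => h (1 / (n + 1)) Nat.one_div_pos_of_nat
  have hf0 : Tendsto (f ∘ u) atTop (𝓝 0) :=
    squeeze_zero (fun n => hf _ (hPu n)) (fun n => (hfu n).le)
      tendsto_one_div_add_atTop_nhds_zero_nat
  obtain ⟨n, hn⟩ := ((hfg u hPu hf0).eventually_lt_const hε).exists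
  exact (hg _ (hPu n)).not_gt hn

theorem stmt19_general {X : Type*} [NormedAddCommGroup X] [NormedSpace ℝ X]
    (α η β C : ℝ) (h1 : 1 < α) (h2 : α < η) (h3 : η < β) (hC : 0 < C)
    (N A B : X → ℝ)
    (hNlow : ∀ u : X, C⁻¹ * ‖u‖ ^ η ≤ N u)
    (hB : ∀ u : X, |B u| ≤ C * ‖u‖ ^ β)
    (hC4 : ∀ u : ℕ → X, (∃ R : ℝ, ∀ n, ‖u n‖ ≤ R) → (∀ n, 0 < A (u n)) →
      Tendsto (fun n => A (u n)) atTop (𝓝 0) → Tendsto (fun n => B (u n)) atTop (𝓝 0)) :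
    ∀ R : ℝ, 0 < R → ∃ δ : ℝ, 0 < δ ∧ ∀ u : X, ‖u‖ ≤ R → 0 < A u →
      (η - α) * N u < (β - α) * B u → δ ≤ A u := by
  intro R _
  obtain ⟨ε, hε, hεB⟩ := exists_pos_forall_lt_of_mul_lt_mul (by linarith) h3 hC
    (sub_pos.2 h2) (sub_pos.2 (h2.trans h3)) hNlow (fun u => (abs_le.1 (hB u)).2)
  obtain ⟨δ, hδ, hδA⟩ := exists_pos_forall_le_of_tendsto_imp
    (P := fun u => ‖u‖ ≤ R ∧ 0 < A u ∧ (η - α) * N u < (β - α) * B u) hε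
    (fun u hu => hu.2.1.le) (fun u hu => hεB u hu.2.2)
    (fun u hu => hC4 u ⟨R, fun n => (hu n).1⟩ fun n => (hu n).2.1)
  exact ⟨δ, hδ, fun u hu hAu hNe => hδA u ⟨hu, hAu, hNe⟩⟩

/-- Under the growth conditions `C⁻¹‖u‖^η ≤ N(u) ≤ C‖u‖^η`,
`|A(u)| ≤ C‖u‖^α`, `|B(u)| ≤ C‖u‖^β` (`1 < α < η < β`) and condition (C4)
(for bounded sequences with `A(u_n) > 0`, `A(u_n) → 0` forces `B(u_n) → 0`),
the functional `A` is bounded away from zero on bounded subsets of the Nehari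
set `N_c⁻`: for every `R > 0` there is `δ > 0` such that `‖u‖ ≤ R`, `A(u) > 0`
and `(η−α)N(u) < (β−α)B(u)` imply `A(u) ≥ δ`. -/
theorem stmt19 {X : Type*} [NormedAddCommGroup X] [NormedSpace ℝ X]
    (α η β C : ℝ) (h1 : 1 < α) (h2 : α < η) (h3 : η < β) (hC : 0 < C)
    (N A B : X → ℝ)
    (hNlow : ∀ u : X, C⁻¹ * ‖u‖ ^ η ≤ N u) (hNup : ∀ u : X, N u ≤ C * ‖u‖ ^ η)
    (hA : ∀ u : X, |A u| ≤ C * ‖u‖ ^ α)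
    (hB : ∀ u : X, |B u| ≤ C * ‖u‖ ^ β)
    (hC4 : ∀ u : ℕ → X, (∃ R : ℝ, ∀ n, ‖u n‖ ≤ R) → (∀ n, 0 < A (u n)) →
      Tendsto (fun n => A (u n)) atTop (𝓝 0) → Tendsto (fun n => B (u n)) atTop (𝓝 0)) :
    ∀ R : ℝ, 0 < R → ∃ δ : ℝ, 0 < δ ∧ ∀ u : X, ‖u‖ ≤ R → 0 < A u →
      (η - α) * N u < (β - α) * B u → δ ≤ A u :=
  stmt19_general α η β C h1 h2 h3 hC N A B hNlow hB hC4
end
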